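/- arXiv:1511.08683 — 10 statements merged into one kernel-verified Lean document; each statement's English description precedes it below -/
import Mathlib

section
/- Let N, d be positive integers and let U be a unitary matrix indexed by Fin N × Fin d (an operator on ℂ^N ⊗ ℂ^d). Call a nonzero matrix Q : Matrix (Fin d) (Fin d) ℂ a commutative-subspace projection for U if Q is an orthogonal projection (Qᴴ = Q and Q*Q = Q), (1 ⊗ Q) * U = U * (1 ⊗ Q), and the compressed algebra Q A(U) Q is commutative, i.e. for all a, b ∈ A(U), (Q*a*Q)*(Q*b*Q) = (Q*b*Q)*(Q*a*Q). Then there exists an orthogonal projection P_c : Matrix (Fin d) (Fin d) ℂ (possibly zero) such that: (i) (1 ⊗ P_c) * U = U * (1 ⊗ P_c) and for all a, b ∈ A(U), (P_c*a*P_c)*(P_c*b*P_c) = (P_c*b*P_c)*(P_c*a*P_c); (ii) every commutative-subspace projection Q for U satisfies Q ≤ P_c, i.e. P_c * Q = Q; (iii) there is no commutative-subspace projection Q for U with Q * P_c = 0 (equivalently, Q ≤ 1 − P_c). -/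
open scoped Kronecker
open Matrix

/-- The slice `M(f,g)` of an operator on `ℂ^N ⊗ ℂ^d`: the partial trace `Tr_{|g⟩⟨f|}[M]`,
given by `M(f,g) k l = ∑ i j, conj (f i) * g j * M (i,k) (j,l)`. -/
noncomputable def envSlice {N d : ℕ} (M : Matrix (Fin N × Fin d) (Fin N × Fin d) ℂ)
    (f g : Fin N → ℂ) : Matrix (Fin d) (Fin d) ℂ :=
  Matrix.of fun k l => ∑ i, ∑ j, (starRingEnd ℂ) (f i) * g j * M (i, k) (j, l)

/-- The Environment Algebra `A(U)`: the unital star-subalgebra generated by all slices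
`U(f,g)` and `Uᴴ(f,g)`. -/
noncomputable def envAlg {N d : ℕ} (U : Matrix (Fin N × Fin d) (Fin N × Fin d) ℂ) :
    StarSubalgebra ℂ (Matrix (Fin d) (Fin d) ℂ) :=
  StarAlgebra.adjoin ℂ
    ({A | ∃ f g, A = envSlice U f g} ∪ {A | ∃ f g, A = envSlice Uᴴ f g})

/-- The Environment Right-Action Algebra `A_r(U)`: the unital star-subalgebra generated by all
products `Uᴴ(f₁,g₁) * U(f₂,g₂)`. -/
noncomputable def envActAlg {N d : ℕ} (U : Matrix (Fin N × Fin d) (Fin N × Fin d) ℂ) :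
    StarSubalgebra ℂ (Matrix (Fin d) (Fin d) ℂ) :=
  StarAlgebra.adjoin ℂ
    {A | ∃ f₁ g₁ f₂ g₂, A = envSlice Uᴴ f₁ g₁ * envSlice U f₂ g₂}

/-- A commutative-subspace projection for `U`: a nonzero orthogonal projection `Q` of the
environment such that `1 ⊗ Q` commutes with `U` and the compressed algebra `Q A(U) Q` is
commutative. -/
def IsCommSubProj {N d : ℕ} (U : Matrix (Fin N × Fin d) (Fin N × Fin d) ℂ)
    (Q : Matrix (Fin d) (Fin d) ℂ) : Prop :=
  Q ≠ 0 ∧ Qᴴ = Q ∧ Q * Q = Q ∧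
    ((1 : Matrix (Fin N) (Fin N) ℂ) ⊗ₖ Q) * U = U * ((1 : Matrix (Fin N) (Fin N) ℂ) ⊗ₖ Q) ∧
    ∀ a ∈ envAlg U, ∀ b ∈ envAlg U,
      (Q * a * Q) * (Q * b * Q) = (Q * b * Q) * (Q * a * Q)

/-!
Let `K` be the space of vectors `v` with `[a, b] x v = 0` for all `a, b, x ∈ A(U)`: the largest
`A(U)`-invariant subspace on which every commutator of `A(U)` vanishes. As `A(U)` is closed under
adjoints, the orthogonal projection `P_c` onto `K` commutes with `A(U)`, and `1 ⊗ P_c` commutes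
with `U` because an operator `1 ⊗ P` commutes with `U` exactly when `P` commutes with every slice
`U(f,g)`. If a projection `Q` commutes with `A(U)`, then `Q A(U) Q` is commutative exactly when
`[a, b] Q = 0` for all `a, b ∈ A(U)`; in that case `[a, b] x Q = [a, b] Q x = 0`, so the range of `Q`
lies in `K`, i.e. `Q ≤ P_c`. A nonzero `Q ≤ P_c` cannot be orthogonal to `P_c`.
-/

theorem Submodule.commute_starProjection {𝕜 E : Type*} [RCLike 𝕜] [NormedAddCommGroup E]
    [InnerProductSpace 𝕜 E] [CompleteSpace E] {K : Submodule 𝕜 E} [K.HasOrthogonalProjection]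
    {T : E →L[𝕜] E} (hT : K ∈ Module.End.invtSubmodule T.toLinearMap)
    (hT' : K ∈ Module.End.invtSubmodule T.adjoint.toLinearMap) :
    Commute K.starProjection T := by
  have h := LinearMap.IsIdempotentElem.commute_iff (T := T.toLinearMap)
    (ContinuousLinearMap.isIdempotentElem_toLinearMap_iff.2 K.isIdempotentElem_starProjection)
  rw [range_starProjection, ker_starProjection] at h
  exact ContinuousLinearMap.coe_injective
    (h.2 ⟨hT, ContinuousLinearMap.orthogonal_mem_invtSubmodule hT'⟩).eq

theorem IsIdempotentElem.commute_compress_iff {R : Type*} [Ring R] {p a b : R}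
    (hp : IsIdempotentElem p) (ha : Commute p a) (hb : Commute p b) :
    Commute (p * a * p) (p * b * p) ↔ (a * b - b * a) * p = 0 := by
  have compress_mul : ∀ x y, Commute p x → Commute p y → p * x * p * (p * y * p) = x * y * p := by
    intro x y hx hy
    rw [hx.eq, hy.eq, mul_assoc x, hp.eq, mul_assoc y, hp.eq, mul_assoc, ← mul_assoc p, hy.eq,
      mul_assoc y, hp.eq, ← mul_assoc]
  rw [Commute, SemiconjBy, compress_mul a b ha hb, compress_mul b a hb ha, sub_mul, sub_eq_zero]

namespace StarSubalgebra

variable {𝕜 n : Type*} [RCLike 𝕜] [Fintype n] [DecidableEq n]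

noncomputable def commutatorKernel (A : StarSubalgebra 𝕜 (Matrix n n 𝕜)) :
    Submodule 𝕜 (EuclideanSpace 𝕜 n) :=
  ⨅ (a ∈ A) (b ∈ A) (x ∈ A), (toEuclideanCLM (𝕜 := 𝕜) ((a * b - b * a) * x)).ker

variable {A : StarSubalgebra 𝕜 (Matrix n n 𝕜)}

theorem mem_commutatorKernel {v : EuclideanSpace 𝕜 n} :
    v ∈ A.commutatorKernel ↔
      ∀ a ∈ A, ∀ b ∈ A, ∀ x ∈ A, toEuclideanCLM (𝕜 := 𝕜) ((a * b - b * a) * x) v = 0 := by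
  simp only [commutatorKernel, Submodule.mem_iInf, LinearMap.mem_ker, ContinuousLinearMap.coe_coe]

theorem commutatorKernel_mem_invtSubmodule {m : Matrix n n 𝕜} (hm : m ∈ A) :
    A.commutatorKernel ∈ Module.End.invtSubmodule (toEuclideanCLM (𝕜 := 𝕜) m).toLinearMap := by
  rw [Module.End.mem_invtSubmodule_iff_forall_mem_of_mem]
  intro v hv
  rw [mem_commutatorKernel] at hv ⊢
  intro a ha b hb x hx
  rw [ContinuousLinearMap.coe_coe, ← mul_apply_eq_comp, ← map_mul, mul_assoc]
  exact hv a ha b hb (x * m) (mul_mem hx hm)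

variable (A) in
noncomputable def commutativeProjection : Matrix n n 𝕜 :=
  (toEuclideanCLM (n := n) (𝕜 := 𝕜)).symm A.commutatorKernel.starProjection

theorem toEuclideanCLM_commutativeProjection :
    toEuclideanCLM (𝕜 := 𝕜) A.commutativeProjection = A.commutatorKernel.starProjection :=
  StarAlgEquiv.apply_symm_apply _ _

theorem isStarProjection_commutativeProjection : IsStarProjection A.commutativeProjection :=
  isStarProjection_starProjection.map (toEuclideanCLM (n := n) (𝕜 := 𝕜)).symm

theorem commute_commutativeProjection {m : Matrix n n 𝕜} (hm : m ∈ A) :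
    Commute A.commutativeProjection m := by
  have hadj := commutatorKernel_mem_invtSubmodule (star_mem hm)
  rw [map_star, ContinuousLinearMap.star_eq_adjoint] at hadj
  have h := Submodule.commute_starProjection (commutatorKernel_mem_invtSubmodule hm) hadj
  rw [← toEuclideanCLM_commutativeProjection] at h
  simpa using h.map (toEuclideanCLM (n := n) (𝕜 := 𝕜)).symm

theorem commutator_mul_commutativeProjection {a b : Matrix n n 𝕜} (ha : a ∈ A) (hb : b ∈ A) :
    (a * b - b * a) * A.commutativeProjection = 0 := by
  apply EquivLike.injective (toEuclideanCLM (n := n) (𝕜 := 𝕜))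
  ext1 v
  have hv := mem_commutatorKernel.1 (A.commutatorKernel.starProjection_apply_mem v) a ha b hb 1
    (one_mem _)
  rw [mul_one] at hv
  rw [map_mul, mul_apply_eq_comp, toEuclideanCLM_commutativeProjection, hv, map_zero,
    _root_.zero_apply]

theorem commutativeProjection_mul_eq_self {q : Matrix n n 𝕜} (hq : ∀ m ∈ A, Commute q m)
    (hcomm : ∀ a ∈ A, ∀ b ∈ A, (a * b - b * a) * q = 0) : A.commutativeProjection * q = q := by
  have hrange : ∀ v, toEuclideanCLM (𝕜 := 𝕜) q v ∈ A.commutatorKernel := by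
    refine fun v => mem_commutatorKernel.2 fun a ha b hb x hx => ?_
    rw [← mul_apply_eq_comp, ← map_mul, mul_assoc, ← (hq x hx).eq, ← mul_assoc,
      hcomm a ha b hb, zero_mul, map_zero, _root_.zero_apply]
  apply EquivLike.injective (toEuclideanCLM (n := n) (𝕜 := 𝕜))
  ext1 v
  rw [map_mul, mul_apply_eq_comp, toEuclideanCLM_commutativeProjection]
  exact Submodule.starProjection_eq_self_iff.2 (hrange v)

end StarSubalgebra

section OneKronecker

variable {ι κ R : Type*} [Fintype ι] [DecidableEq ι] [Fintype κ] [CommSemiring R]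

theorem one_kronecker_mul_apply (Q : Matrix κ κ R) (M : Matrix (ι × κ) (ι × κ) R) (i j : ι)
    (k l : κ) : ((1 : Matrix ι ι R) ⊗ₖ Q * M) (i, k) (j, l) = ∑ m, Q k m * M (i, m) (j, l) := by
  simp [mul_apply, Fintype.sum_prod_type, one_apply, ite_mul]

theorem mul_one_kronecker_apply (Q : Matrix κ κ R) (M : Matrix (ι × κ) (ι × κ) R) (i j : ι)
    (k l : κ) : (M * (1 : Matrix ι ι R) ⊗ₖ Q) (i, k) (j, l) = ∑ m, M (i, k) (j, m) * Q m l := by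
  simp [mul_apply, Fintype.sum_prod_type, one_apply, mul_ite]

end OneKronecker

section EnvSlice

variable {N d : ℕ}

theorem envSlice_one_kronecker_mul (M : Matrix (Fin N × Fin d) (Fin N × Fin d) ℂ)
    (Q : Matrix (Fin d) (Fin d) ℂ) (f g : Fin N → ℂ) :
    envSlice ((1 : Matrix (Fin N) (Fin N) ℂ) ⊗ₖ Q * M) f g = Q * envSlice M f g := by
  ext k l
  simp only [envSlice, of_apply, one_kronecker_mul_apply]
  simp only [mul_apply, of_apply, Finset.mul_sum]
  conv_rhs => rw [Finset.sum_comm]; enter [2, i]; rw [Finset.sum_comm]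
  exact Finset.sum_congr rfl fun _ _ => Finset.sum_congr rfl fun _ _ =>
    Finset.sum_congr rfl fun _ _ => by ring

theorem envSlice_mul_one_kronecker (M : Matrix (Fin N × Fin d) (Fin N × Fin d) ℂ)
    (Q : Matrix (Fin d) (Fin d) ℂ) (f g : Fin N → ℂ) :
    envSlice (M * (1 : Matrix (Fin N) (Fin N) ℂ) ⊗ₖ Q) f g = envSlice M f g * Q := by
  ext k l
  simp only [envSlice, of_apply, mul_one_kronecker_apply]
  simp only [mul_apply, of_apply, Finset.mul_sum, Finset.sum_mul]
  conv_rhs => rw [Finset.sum_comm]; enter [2, i]; rw [Finset.sum_comm]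
  exact Finset.sum_congr rfl fun _ _ => Finset.sum_congr rfl fun _ _ =>
    Finset.sum_congr rfl fun _ _ => by ring

theorem envSlice_single (M : Matrix (Fin N × Fin d) (Fin N × Fin d) ℂ) (i j : Fin N)
    (k l : Fin d) : envSlice M (Pi.single i 1) (Pi.single j 1) k l = M (i, k) (j, l) := by
  simp [envSlice, Pi.single_apply, apply_ite (starRingEnd ℂ), ite_mul]

theorem eq_of_envSlice_eq {M M' : Matrix (Fin N × Fin d) (Fin N × Fin d) ℂ}
    (h : ∀ f g, envSlice M f g = envSlice M' f g) : M = M' := by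
  ext ⟨i, k⟩ ⟨j, l⟩
  simpa only [envSlice_single] using congrFun₂ (h (Pi.single i 1) (Pi.single j 1)) k l

theorem commute_one_kronecker_iff (M : Matrix (Fin N × Fin d) (Fin N × Fin d) ℂ)
    (Q : Matrix (Fin d) (Fin d) ℂ) :
    Commute ((1 : Matrix (Fin N) (Fin N) ℂ) ⊗ₖ Q) M ↔ ∀ f g, Commute Q (envSlice M f g) := by
  refine ⟨fun h f g => ?_, fun h => eq_of_envSlice_eq fun f g => ?_⟩
  · rw [Commute, SemiconjBy, ← envSlice_one_kronecker_mul, h.eq, envSlice_mul_one_kronecker]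
  · rw [envSlice_one_kronecker_mul, envSlice_mul_one_kronecker, (h f g).eq]

theorem envSlice_mem_envAlg (U : Matrix (Fin N × Fin d) (Fin N × Fin d) ℂ) (f g : Fin N → ℂ) :
    envSlice U f g ∈ envAlg U :=
  StarAlgebra.subset_adjoin ℂ _ (Or.inl ⟨f, g, rfl⟩)

theorem envAlg_le_centralizer {U : Matrix (Fin N × Fin d) (Fin N × Fin d) ℂ}
    {Q : Matrix (Fin d) (Fin d) ℂ} (hQ : IsSelfAdjoint Q)
    (hQU : Commute ((1 : Matrix (Fin N) (Fin N) ℂ) ⊗ₖ Q) U) :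
    envAlg U ≤ StarSubalgebra.centralizer ℂ {Q} := by
  have hQU' : Commute ((1 : Matrix (Fin N) (Fin N) ℂ) ⊗ₖ Q) Uᴴ := by
    have hQ' : Qᴴ = Q := hQ
    simpa [star_eq_conjTranspose, conjTranspose_kronecker, hQ'] using hQU.star_star
  refine StarAlgebra.adjoin_le ?_
  rintro _ (⟨f, g, rfl⟩ | ⟨f, g, rfl⟩) <;>
    simp only [SetLike.mem_coe, StarSubalgebra.mem_centralizer_iff, Set.mem_singleton_iff,
      forall_eq, hQ.star_eq, and_self]
  · exact ((commute_one_kronecker_iff U Q).1 hQU f g).eq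
  · exact ((commute_one_kronecker_iff Uᴴ Q).1 hQU' f g).eq

end EnvSlice

theorem exists_maximal_commutative_projection_general (N d : ℕ)
    (U : Matrix (Fin N × Fin d) (Fin N × Fin d) ℂ) :
    ∃ Pc : Matrix (Fin d) (Fin d) ℂ,
      Pcᴴ = Pc ∧ Pc * Pc = Pc ∧
      ((1 : Matrix (Fin N) (Fin N) ℂ) ⊗ₖ Pc) * U
        = U * ((1 : Matrix (Fin N) (Fin N) ℂ) ⊗ₖ Pc) ∧
      (∀ a ∈ envAlg U, ∀ b ∈ envAlg U,
        (Pc * a * Pc) * (Pc * b * Pc) = (Pc * b * Pc) * (Pc * a * Pc)) ∧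
      (∀ Q : Matrix (Fin d) (Fin d) ℂ, IsCommSubProj U Q → Pc * Q = Q) ∧
      ¬ ∃ Q : Matrix (Fin d) (Fin d) ℂ, IsCommSubProj U Q ∧ Q * Pc = 0 := by
  set A := envAlg U
  set Pc := A.commutativeProjection
  have hPc : IsStarProjection Pc := A.isStarProjection_commutativeProjection
  have hPcH : Pcᴴ = Pc := hPc.isSelfAdjoint
  have hPcA : ∀ m ∈ A, Commute Pc m := fun _ => A.commute_commutativeProjection
  have hmax : ∀ Q, IsCommSubProj U Q → Pc * Q = Q := by
    rintro Q ⟨-, hQH, hQQ, hQU, hQcomp⟩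
    have hQA : ∀ m ∈ A, Commute Q m := fun m hm =>
      ((StarSubalgebra.mem_centralizer_iff ℂ).1 (envAlg_le_centralizer hQH hQU hm) Q rfl).1
    exact A.commutativeProjection_mul_eq_self hQA fun a ha b hb =>
      (IsIdempotentElem.commute_compress_iff hQQ (hQA a ha) (hQA b hb)).1 (hQcomp a ha b hb)
  refine ⟨Pc, hPcH, hPc.isIdempotentElem, ?_, fun a ha b hb => ?_, hmax, ?_⟩
  · exact (commute_one_kronecker_iff U Pc).2 fun f g => hPcA _ (envSlice_mem_envAlg U f g)
  · exact (hPc.isIdempotentElem.commute_compress_iff (hPcA a ha) (hPcA b hb)).2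
      (A.commutator_mul_commutativeProjection ha hb)
  · rintro ⟨Q, hQ, hQPc⟩
    refine hQ.1 ?_
    calc Q = (Pc * Q)ᴴ := by rw [hmax Q hQ, hQ.2.1]
      _ = Q * Pc := by rw [conjTranspose_mul, hQ.2.1, hPcH]
      _ = 0 := hQPc

/-- existence of a maximal commutative-subspace projection `P_c`, decomposing
the environment into a maximal classical part and a quantum part. -/
theorem exists_maximal_commutative_projection (N d : ℕ) (hN : 0 < N) (hd : 0 < d)
    (U : Matrix (Fin N × Fin d) (Fin N × Fin d) ℂ)
    (hU : Uᴴ * U = 1) (hU' : U * Uᴴ = 1) :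
    ∃ Pc : Matrix (Fin d) (Fin d) ℂ,
      Pcᴴ = Pc ∧ Pc * Pc = Pc ∧
      ((1 : Matrix (Fin N) (Fin N) ℂ) ⊗ₖ Pc) * U
        = U * ((1 : Matrix (Fin N) (Fin N) ℂ) ⊗ₖ Pc) ∧
      (∀ a ∈ envAlg U, ∀ b ∈ envAlg U,
        (Pc * a * Pc) * (Pc * b * Pc) = (Pc * b * Pc) * (Pc * a * Pc)) ∧
      (∀ Q : Matrix (Fin d) (Fin d) ℂ, IsCommSubProj U Q → Pc * Q = Q) ∧
      ¬ ∃ Q : Matrix (Fin d) (Fin d) ℂ, IsCommSubProj U Q ∧ Q * Pc = 0 :=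
  exists_maximal_commutative_projection_general N d U
end

section
/- Let N, d be positive integers and let U, V₁, V₂ be unitary matrices indexed by Fin N × Fin d. Suppose that for every X : Matrix (Fin N) (Fin N) ℂ, V₁ᴴ * (X ⊗ 1) * V₁ = Uᴴ * (X ⊗ 1) * U and V₂ᴴ * (X ⊗ 1) * V₂ = Uᴴ * (X ⊗ 1) * U, and that every block V₁(e_i, e_j) and every block V₂(e_i, e_j) (slices over the standard basis of ℂ^N) belongs to A_r(U). Then there exists a unitary W ∈ A_r(U) (a d × d matrix) such that V₁ * V₂ᴴ = 1 ⊗ W; in particular V₁V₂ᴴ ∈ I ⊗ A_r(U). -/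
open scoped Kronecker
open Matrix

/-!
`T := V₁ * V₂ᴴ` commutes with every `X ⊗ 1`, because `V₁` and `V₂` implement the same action;
hence `T = 1 ⊗ W`. Then `W` is the `(i₀, i₀)` block of `T`, i.e.
`W = ∑ m, V₁(e_{i₀}, e_m) * V₂(e_{i₀}, e_m)ᴴ ∈ A_r(U)`, and `W` is unitary because `T` is.
-/

namespace Matrix

variable {ι κ R : Type*} [DecidableEq ι] [DecidableEq κ]

theorem eq_one_kronecker_of_commute [Fintype ι] [Fintype κ] [CommSemiring R]
    {T : Matrix (ι × κ) (ι × κ) R}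
    (hT : ∀ X : Matrix ι ι R, Commute (X ⊗ₖ (1 : Matrix κ κ R)) T) (i₀ : ι) :
    T = 1 ⊗ₖ of fun k l => T (i₀, k) (i₀, l) := by
  ext ⟨i, k⟩ ⟨j, l⟩
  -- `single i₀ i 1 ⊗ 1` moves block row `i` of `T` to row `i₀` on the left, and block column
  -- `i₀` to column `i` on the right.
  have h := congr_fun₂ (hT (single i₀ i 1)).eq (i₀, k) (j, l)
  simp only [mul_apply, kroneckerMap_apply, single_apply, one_apply, mul_ite, mul_one, mul_zero,
    ite_mul, one_mul, zero_mul, Fintype.sum_prod_type, Finset.sum_ite_eq, Finset.sum_ite_eq',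
    Finset.mem_univ, ite_and, true_and, ↓reduceIte] at h
  simp [one_apply, h]

omit [DecidableEq κ] in
theorem one_kronecker_injective [Nonempty ι] [MulZeroOneClass R] :
    Function.Injective fun W : Matrix κ κ R => (1 : Matrix ι ι R) ⊗ₖ W := by
  intro A B h
  obtain ⟨i⟩ := ‹Nonempty ι›
  ext k l
  simpa using congr_fun₂ h (i, k) (i, l)

theorem mem_unitary_of_one_kronecker_mem_unitary [Fintype ι] [Fintype κ] [Nonempty ι]
    [CommSemiring R] [StarRing R] {W : Matrix κ κ R}
    (h : (1 : Matrix ι ι R) ⊗ₖ W ∈ unitary (Matrix (ι × κ) (ι × κ) R)) :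
    W ∈ unitary (Matrix κ κ R) := by
  rw [Unitary.mem_iff, star_eq_conjTranspose, conjTranspose_kronecker, conjTranspose_one,
    ← mul_kronecker_mul, ← mul_kronecker_mul, one_mul, ← one_kronecker_one] at h
  exact ⟨one_kronecker_injective h.1, one_kronecker_injective h.2⟩

end Matrix

theorem commute_mul_of_conj_eq {M : Type*} [Monoid M] {a₁ a₂ b₁ b₂ y : M}
    (h₁ : a₁ * b₁ = 1) (h₂ : a₂ * b₂ = 1) (h : b₁ * y * a₁ = b₂ * y * a₂) :
    Commute y (a₁ * b₂) :=
  calc y * (a₁ * b₂) = a₁ * b₁ * y * a₁ * b₂ := by rw [h₁, one_mul, mul_assoc]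
    _ = a₁ * (b₂ * y * a₂) * b₂ := by rw [← h]; simp only [mul_assoc]
    _ = a₁ * b₂ * y * (a₂ * b₂) := by simp only [mul_assoc]
    _ = a₁ * b₂ * y := by rw [h₂, mul_one]

section envSlice

variable {N d : ℕ}

lemma envSlice_conjTranspose (M : Matrix (Fin N × Fin d) (Fin N × Fin d) ℂ)
    (f g : Fin N → ℂ) : envSlice Mᴴ g f = (envSlice M f g)ᴴ := by
  ext k l
  simp only [envSlice, of_apply, conjTranspose_apply, star_sum, star_mul', Complex.star_def,
    Complex.conj_conj]
  rw [Finset.sum_comm]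
  exact Finset.sum_congr rfl fun i _ => Finset.sum_congr rfl fun j _ => by ring

lemma envSlice_single_single (M : Matrix (Fin N × Fin d) (Fin N × Fin d) ℂ) (i j : Fin N) :
    envSlice M (Pi.single i 1) (Pi.single j 1) = (comp _ _ _ _ ℂ).symm M i j := by
  ext k l
  simp [envSlice, Pi.single_apply]

lemma envSlice_mul_single_single (A B : Matrix (Fin N × Fin d) (Fin N × Fin d) ℂ)
    (i j : Fin N) :
    envSlice (A * B) (Pi.single i 1) (Pi.single j 1) =
      ∑ m, envSlice A (Pi.single i 1) (Pi.single m 1) *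
        envSlice B (Pi.single m 1) (Pi.single j 1) := by
  simp only [envSlice_single_single, ← compRingEquiv_symm_apply, map_mul]
  rfl

lemma envSlice_kronecker_single_single (X : Matrix (Fin N) (Fin N) ℂ)
    (W : Matrix (Fin d) (Fin d) ℂ) (i j : Fin N) :
    envSlice (X ⊗ₖ W) (Pi.single i 1) (Pi.single j 1) = X i j • W := by
  ext k l
  simp [envSlice_single_single]

end envSlice

theorem representatives_differ_by_unitary_in_envActAlg_general (N d : ℕ) (hN : 0 < N)
    (U V₁ V₂ : Matrix (Fin N × Fin d) (Fin N × Fin d) ℂ)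
    (hV₁ : V₁ᴴ * V₁ = 1) (hV₁' : V₁ * V₁ᴴ = 1)
    (hV₂ : V₂ᴴ * V₂ = 1) (hV₂' : V₂ * V₂ᴴ = 1)
    (hact₁ : ∀ X : Matrix (Fin N) (Fin N) ℂ,
      V₁ᴴ * (X ⊗ₖ (1 : Matrix (Fin d) (Fin d) ℂ)) * V₁
        = Uᴴ * (X ⊗ₖ (1 : Matrix (Fin d) (Fin d) ℂ)) * U)
    (hact₂ : ∀ X : Matrix (Fin N) (Fin N) ℂ,
      V₂ᴴ * (X ⊗ₖ (1 : Matrix (Fin d) (Fin d) ℂ)) * V₂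
        = Uᴴ * (X ⊗ₖ (1 : Matrix (Fin d) (Fin d) ℂ)) * U)
    (hblk₁ : ∀ i j : Fin N, envSlice V₁ (Pi.single i 1) (Pi.single j 1) ∈ envActAlg U)
    (hblk₂ : ∀ i j : Fin N, envSlice V₂ (Pi.single i 1) (Pi.single j 1) ∈ envActAlg U) :
    ∃ W : Matrix (Fin d) (Fin d) ℂ, W ∈ envActAlg U ∧ Wᴴ * W = 1 ∧ W * Wᴴ = 1 ∧
      V₁ * V₂ᴴ = (1 : Matrix (Fin N) (Fin N) ℂ) ⊗ₖ W := by
  have : NeZero N := ⟨hN.ne'⟩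
  obtain ⟨W, hW⟩ : ∃ W, V₁ * V₂ᴴ = 1 ⊗ₖ W :=
    ⟨_, eq_one_kronecker_of_commute
      (fun X => commute_mul_of_conj_eq hV₁' hV₂' ((hact₁ X).trans (hact₂ X).symm)) 0⟩
  have hWslice : envSlice (V₁ * V₂ᴴ) (Pi.single 0 1) (Pi.single 0 1) = W := by
    rw [hW, envSlice_kronecker_single_single, one_apply_eq, one_smul]
  have hWmem : W ∈ envActAlg U := by
    rw [← hWslice, envSlice_mul_single_single]
    refine sum_mem fun m _ => mul_mem (hblk₁ 0 m) ?_
    rw [envSlice_conjTranspose]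
    exact star_mem (hblk₂ 0 m)
  have hT : V₁ * V₂ᴴ ∈ unitary (Matrix (Fin N × Fin d) (Fin N × Fin d) ℂ) :=
    mul_mem (Unitary.mem_iff.mpr ⟨hV₁, hV₁'⟩) (Unitary.star_mem (Unitary.mem_iff.mpr ⟨hV₂, hV₂'⟩))
  have hWunitary := mem_unitary_of_one_kronecker_mem_unitary (hW ▸ hT)
  exact ⟨W, hWmem, hWunitary.1, hWunitary.2, hW⟩

/-- two representatives `V₁, V₂` of the action of `U`, both lying in
`B(H) ⊗ A_r(U)`, differ by a unitary `W ∈ A_r(U)`: `V₁ V₂ᴴ = 1 ⊗ W`. -/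
theorem representatives_differ_by_unitary_in_envActAlg (N d : ℕ) (hN : 0 < N) (hd : 0 < d)
    (U V₁ V₂ : Matrix (Fin N × Fin d) (Fin N × Fin d) ℂ)
    (hU : Uᴴ * U = 1) (hU' : U * Uᴴ = 1)
    (hV₁ : V₁ᴴ * V₁ = 1) (hV₁' : V₁ * V₁ᴴ = 1)
    (hV₂ : V₂ᴴ * V₂ = 1) (hV₂' : V₂ * V₂ᴴ = 1)
    (hact₁ : ∀ X : Matrix (Fin N) (Fin N) ℂ,
      V₁ᴴ * (X ⊗ₖ (1 : Matrix (Fin d) (Fin d) ℂ)) * V₁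
        = Uᴴ * (X ⊗ₖ (1 : Matrix (Fin d) (Fin d) ℂ)) * U)
    (hact₂ : ∀ X : Matrix (Fin N) (Fin N) ℂ,
      V₂ᴴ * (X ⊗ₖ (1 : Matrix (Fin d) (Fin d) ℂ)) * V₂
        = Uᴴ * (X ⊗ₖ (1 : Matrix (Fin d) (Fin d) ℂ)) * U)
    (hblk₁ : ∀ i j : Fin N, envSlice V₁ (Pi.single i 1) (Pi.single j 1) ∈ envActAlg U)
    (hblk₂ : ∀ i j : Fin N, envSlice V₂ (Pi.single i 1) (Pi.single j 1) ∈ envActAlg U) :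
    ∃ W : Matrix (Fin d) (Fin d) ℂ, W ∈ envActAlg U ∧ Wᴴ * W = 1 ∧ W * Wᴴ = 1 ∧
      V₁ * V₂ᴴ = (1 : Matrix (Fin N) (Fin N) ℂ) ⊗ₖ W :=
  representatives_differ_by_unitary_in_envActAlg_general N d hN U V₁ V₂ hV₁ hV₁' hV₂ hV₂' hact₁
    hact₂ hblk₁ hblk₂
end

section
/- Let N, d be positive integers and let U be a unitary matrix indexed by Fin N × Fin d. For every Y : Matrix (Fin d) (Fin d) ℂ, the following are equivalent: (i) (1 ⊗ Y) * U = U * (1 ⊗ Y) and (1 ⊗ Y) * Uᴴ = Uᴴ * (1 ⊗ Y) (equivalently, Y belongs to the commutant of A(U)); (ii) L(Y) = Y and L*(Y) = Y, where L(X) k l = (1/N) ∑_{i} (U * (1 ⊗ X) * Uᴴ) (i,k) (i,l) and L*(X) k l = (1/N) ∑_{i} (Uᴴ * (1 ⊗ X) * U) (i,k) (i,l). That is, the commutant of the Environment Algebra A(U) is exactly the common eigenspace of L and L* for the eigenvalue 1. -/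
/-!
Write `A = 1 ⊗ Y` and `B = U A Uᴴ`. Up to the factor `1/N`, `L(Y)` is the partial trace of `B`
and `Y` that of `A`, while `⟪1 ⊗ Y, M⟫ = ⟪Y, Tr_H M⟫` for the Frobenius inner product. So
`L(Y) = Y` gives `⟪A, B⟫ = ⟪A, A⟫`; as conjugation by `U` preserves the norm, `‖B - A‖² = 0`,
i.e. `U A Uᴴ = A`, which says that `A` commutes with `U`. The same argument with `Uᴴ` in place
of `U` handles `L*`.
-/

open scoped Kronecker
open Matrix

/-- The CP map `L : X ↦ Tr_H[U ((1/N)·1 ⊗ X) Uᴴ]` on environment operators. -/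
noncomputable def Lmap {N d : ℕ} (U : Matrix (Fin N × Fin d) (Fin N × Fin d) ℂ)
    (X : Matrix (Fin d) (Fin d) ℂ) : Matrix (Fin d) (Fin d) ℂ :=
  Matrix.of fun k l => (N : ℂ)⁻¹ *
    ∑ i, (U * ((1 : Matrix (Fin N) (Fin N) ℂ) ⊗ₖ X) * Uᴴ) (i, k) (i, l)

/-- The adjoint CP map `L* : X ↦ Tr_H[Uᴴ ((1/N)·1 ⊗ X) U]`. -/
noncomputable def LstarMap {N d : ℕ} (U : Matrix (Fin N × Fin d) (Fin N × Fin d) ℂ)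
    (X : Matrix (Fin d) (Fin d) ℂ) : Matrix (Fin d) (Fin d) ℂ :=
  Matrix.of fun k l => (N : ℂ)⁻¹ *
    ∑ i, (Uᴴ * ((1 : Matrix (Fin N) (Fin N) ℂ) ⊗ₖ X) * U) (i, k) (i, l)

namespace Matrix

variable {m n R : Type*} [Fintype m]

def partialTrace [AddCommMonoid R] (M : Matrix (m × n) (m × n) R) : Matrix n n R :=
  of fun k l => ∑ i, M (i, k) (i, l)

section Semiring

variable [DecidableEq m] [Semiring R]

theorem partialTrace_one_kronecker (Y : Matrix n n R) :
    partialTrace ((1 : Matrix m m R) ⊗ₖ Y) = Fintype.card m • Y := by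
  ext k l
  simp [partialTrace]

variable [Fintype n]

theorem one_kronecker_mul_apply (Y : Matrix n n R) (M : Matrix (m × n) (m × n) R) (i : m)
    (k : n) (x : m × n) :
    ((1 : Matrix m m R) ⊗ₖ Y * M) (i, k) x = ∑ l, Y k l * M (i, l) x := by
  simp [mul_apply, Fintype.sum_prod_type, one_apply]

theorem trace_one_kronecker_mul (Y : Matrix n n R) (M : Matrix (m × n) (m × n) R) :
    trace ((1 : Matrix m m R) ⊗ₖ Y * M) = trace (Y * partialTrace M) := by
  simp only [trace, diag_apply, Fintype.sum_prod_type, one_kronecker_mul_apply]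
  simp only [mul_apply, partialTrace, of_apply, Finset.mul_sum]
  rw [Finset.sum_comm]
  exact Finset.sum_congr rfl fun _ _ => Finset.sum_comm

end Semiring

variable [Fintype n]

theorem eq_of_trace_conjTranspose_mul_eq [PartialOrder R] [NonUnitalRing R] [StarRing R]
    [StarOrderedRing R] [NoZeroDivisors R] {A B : Matrix m n R}
    (hAB : trace (Aᴴ * B) = trace (Aᴴ * A)) (hBB : trace (Bᴴ * B) = trace (Aᴴ * A)) :
    B = A := by
  have hBA : trace (Bᴴ * A) = trace (Aᴴ * A) :=
    calc trace (Bᴴ * A) = star (trace (Aᴴ * B)) := by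
          rw [← trace_conjTranspose, conjTranspose_mul, conjTranspose_conjTranspose]
      _ = star (trace (Aᴴ * A)) := by rw [hAB]
      _ = trace (Aᴴ * A) := by
          rw [← trace_conjTranspose, conjTranspose_mul, conjTranspose_conjTranspose]
  rw [← sub_eq_zero, ← trace_conjTranspose_mul_self_eq_zero_iff, conjTranspose_sub,
    Matrix.sub_mul, Matrix.mul_sub, Matrix.mul_sub, trace_sub, trace_sub, trace_sub, hAB, hBB,
    hBA, sub_self]

theorem conj_eq_of_partialTrace_conj_eq [DecidableEq m] [DecidableEq n] [PartialOrder R]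
    [CommRing R] [StarRing R] [StarOrderedRing R] [NoZeroDivisors R]
    {V : Matrix (m × n) (m × n) R} (hV : Vᴴ * V = 1) {Y : Matrix n n R}
    (h : partialTrace (V * ((1 : Matrix m m R) ⊗ₖ Y) * Vᴴ) =
      partialTrace ((1 : Matrix m m R) ⊗ₖ Y)) :
    V * ((1 : Matrix m m R) ⊗ₖ Y) * Vᴴ = (1 : Matrix m m R) ⊗ₖ Y := by
  set A := (1 : Matrix m m R) ⊗ₖ Y
  have hA : Aᴴ = (1 : Matrix m m R) ⊗ₖ Yᴴ := by
    rw [conjTranspose_kronecker, conjTranspose_one]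
  apply eq_of_trace_conjTranspose_mul_eq
  · rw [hA, trace_one_kronecker_mul, trace_one_kronecker_mul, h]
  · calc trace ((V * A * Vᴴ)ᴴ * (V * A * Vᴴ)) = trace (V * (Aᴴ * A) * Vᴴ) := by
          simp only [conjTranspose_mul, conjTranspose_conjTranspose, mul_assoc]
          rw [← mul_assoc Vᴴ V, hV, one_mul]
      _ = trace (Vᴴ * V * (Aᴴ * A)) := trace_mul_cycle _ _ _
      _ = trace (Aᴴ * A) := by rw [hV, one_mul]

end Matrix

theorem conj_eq_self_iff_commute {M : Type*} [Monoid M] {u v x : M} (hvu : v * u = 1)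
    (huv : u * v = 1) : u * x * v = x ↔ x * u = u * x := by
  constructor
  · intro h
    calc x * u = u * x * v * u := by rw [h]
      _ = u * x := by rw [mul_assoc, hvu, mul_one]
  · intro h
    rw [← h, mul_assoc, huv, mul_one]

section Environment

variable {N d : ℕ}

theorem Lmap_eq_smul_partialTrace (U : Matrix (Fin N × Fin d) (Fin N × Fin d) ℂ)
    (X : Matrix (Fin d) (Fin d) ℂ) :
    Lmap U X = (N : ℂ)⁻¹ • partialTrace (U * ((1 : Matrix (Fin N) (Fin N) ℂ) ⊗ₖ X) * Uᴴ) :=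
  rfl

theorem LstarMap_eq_Lmap_conjTranspose (U : Matrix (Fin N × Fin d) (Fin N × Fin d) ℂ)
    (X : Matrix (Fin d) (Fin d) ℂ) : LstarMap U X = Lmap Uᴴ X := by
  simp only [LstarMap, Lmap, conjTranspose_conjTranspose]

open scoped ComplexOrder in
theorem Lmap_eq_self_iff (hN : 0 < N) {V : Matrix (Fin N × Fin d) (Fin N × Fin d) ℂ}
    (hV : Vᴴ * V = 1) (Y : Matrix (Fin d) (Fin d) ℂ) :
    Lmap V Y = Y ↔
      V * ((1 : Matrix (Fin N) (Fin N) ℂ) ⊗ₖ Y) * Vᴴ = (1 : Matrix (Fin N) (Fin N) ℂ) ⊗ₖ Y := by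
  set A := (1 : Matrix (Fin N) (Fin N) ℂ) ⊗ₖ Y
  have hNC : (N : ℂ) ≠ 0 := Nat.cast_ne_zero.2 hN.ne'
  have hY : (N : ℂ)⁻¹ • partialTrace A = Y := by
    rw [partialTrace_one_kronecker, Fintype.card_fin, ← Nat.cast_smul_eq_nsmul ℂ, smul_smul,
      inv_mul_cancel₀ hNC, one_smul]
  calc Lmap V Y = Y ↔ (N : ℂ)⁻¹ • partialTrace (V * A * Vᴴ) = (N : ℂ)⁻¹ • partialTrace A := by
        rw [Lmap_eq_smul_partialTrace, hY]
    _ ↔ partialTrace (V * A * Vᴴ) = partialTrace A := smul_right_inj (inv_ne_zero hNC)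
    _ ↔ V * A * Vᴴ = A := ⟨conj_eq_of_partialTrace_conj_eq hV, congrArg partialTrace⟩

end Environment

theorem commutant_envAlg_eq_fixed_points_general (N d : ℕ) (hN : 0 < N)
    (U : Matrix (Fin N × Fin d) (Fin N × Fin d) ℂ)
    (hU : Uᴴ * U = 1) (hU' : U * Uᴴ = 1) :
    ∀ Y : Matrix (Fin d) (Fin d) ℂ,
      (((1 : Matrix (Fin N) (Fin N) ℂ) ⊗ₖ Y) * U = U * ((1 : Matrix (Fin N) (Fin N) ℂ) ⊗ₖ Y) ∧
        ((1 : Matrix (Fin N) (Fin N) ℂ) ⊗ₖ Y) * Uᴴ = Uᴴ * ((1 : Matrix (Fin N) (Fin N) ℂ) ⊗ₖ Y))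
      ↔ (Lmap U Y = Y ∧ LstarMap U Y = Y) := by
  intro Y
  have hUstar : Uᴴᴴ * Uᴴ = 1 := by rw [conjTranspose_conjTranspose, hU']
  rw [Lmap_eq_self_iff hN hU, LstarMap_eq_Lmap_conjTranspose, Lmap_eq_self_iff hN hUstar,
    conjTranspose_conjTranspose, conj_eq_self_iff_commute hU hU', conj_eq_self_iff_commute hU' hU]

/-- the commutant of the Environment Algebra `A(U)` is exactly the common
eigenspace of `L` and `L*` for the eigenvalue `1`. -/
theorem commutant_envAlg_eq_fixed_points (N d : ℕ) (hN : 0 < N) (hd : 0 < d)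
    (U : Matrix (Fin N × Fin d) (Fin N × Fin d) ℂ)
    (hU : Uᴴ * U = 1) (hU' : U * Uᴴ = 1) :
    ∀ Y : Matrix (Fin d) (Fin d) ℂ,
      (((1 : Matrix (Fin N) (Fin N) ℂ) ⊗ₖ Y) * U = U * ((1 : Matrix (Fin N) (Fin N) ℂ) ⊗ₖ Y) ∧
        ((1 : Matrix (Fin N) (Fin N) ℂ) ⊗ₖ Y) * Uᴴ = Uᴴ * ((1 : Matrix (Fin N) (Fin N) ℂ) ⊗ₖ Y))
      ↔ (Lmap U Y = Y ∧ LstarMap U Y = Y) :=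
  commutant_envAlg_eq_fixed_points_general N d hN U hU hU'
end

section
/- Let N, d be positive integers and let U be a unitary matrix indexed by Fin N × Fin d. For every Y : Matrix (Fin d) (Fin d) ℂ, the following are equivalent: (i) (1 ⊗ Y) commutes with Uᴴ * (X ⊗ 1) * U for every X : Matrix (Fin N) (Fin N) ℂ (equivalently, Y belongs to the commutant of A_r(U)); (ii) L*(L(Y)) = Y, where L(X) k l = (1/N) ∑_{i} (U * (1 ⊗ X) * Uᴴ) (i,k) (i,l) and L*(X) k l = (1/N) ∑_{i} (Uᴴ * (1 ⊗ X) * U) (i,k) (i,l). That is, the commutant of the Environment Right-Action Algebra A_r(U) is exactly the right-singular space of L for the singular value 1. -/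
open scoped Kronecker
open Matrix

namespace EnvAux

variable {N d : ℕ}

/-- The Kraus blocks of `U`. -/
noncomputable def E (U : Matrix (Fin N × Fin d) (Fin N × Fin d) ℂ) (i j : Fin N) :
    Matrix (Fin d) (Fin d) ℂ := Matrix.of fun k l => U (i, k) (j, l)

lemma sumA {U : Matrix (Fin N × Fin d) (Fin N × Fin d) ℂ} (hU : Uᴴ * U = 1) (a b : Fin N) :
    ∑ i, (E U i a)ᴴ * E U i b = if a = b then (1 : Matrix (Fin d) (Fin d) ℂ) else 0 := by
  ext k l
  have h : (Uᴴ * U) (a, k) (b, l) = (1 : Matrix (Fin N × Fin d) (Fin N × Fin d) ℂ) (a, k) (b, l) := by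
    rw [hU]
  simp only [Matrix.mul_apply, Matrix.conjTranspose_apply, Fintype.sum_prod_type,
    Matrix.one_apply, Prod.mk.injEq] at h
  simp only [Matrix.sum_apply, Matrix.mul_apply, Matrix.conjTranspose_apply, E, Matrix.of_apply]
  rw [h]
  by_cases hab : a = b <;> simp [hab, Matrix.one_apply]

lemma sumB {U : Matrix (Fin N × Fin d) (Fin N × Fin d) ℂ} (hU' : U * Uᴴ = 1) (a b : Fin N) :
    ∑ j, E U a j * (E U b j)ᴴ = if a = b then (1 : Matrix (Fin d) (Fin d) ℂ) else 0 := by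
  ext k l
  have h : (U * Uᴴ) (a, k) (b, l) = (1 : Matrix (Fin N × Fin d) (Fin N × Fin d) ℂ) (a, k) (b, l) := by
    rw [hU']
  simp only [Matrix.mul_apply, Matrix.conjTranspose_apply, Fintype.sum_prod_type,
    Matrix.one_apply, Prod.mk.injEq] at h
  simp only [Matrix.sum_apply, Matrix.mul_apply, Matrix.conjTranspose_apply, E, Matrix.of_apply]
  rw [h]
  by_cases hab : a = b <;> simp [hab, Matrix.one_apply]

lemma Lmap_eq (U : Matrix (Fin N × Fin d) (Fin N × Fin d) ℂ) (Y : Matrix (Fin d) (Fin d) ℂ) :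
    Lmap U Y = (N : ℂ)⁻¹ • ∑ i, ∑ j, E U i j * Y * (E U i j)ᴴ := by
  ext k l
  simp only [Lmap, Matrix.of_apply, Matrix.smul_apply, Matrix.sum_apply, smul_eq_mul]
  congr 1
  refine Finset.sum_congr rfl fun i _ => ?_
  simp only [Matrix.mul_apply, Matrix.conjTranspose_apply, Fintype.sum_prod_type, E,
    Matrix.of_apply, Matrix.kroneckerMap_apply, Matrix.one_apply]
  simp [mul_ite, mul_one, mul_zero, ite_mul, zero_mul, Finset.sum_ite_irrel, Finset.sum_const_zero, Finset.sum_ite_eq', Finset.mul_sum, Finset.sum_mul]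

lemma Lstar_eq (U : Matrix (Fin N × Fin d) (Fin N × Fin d) ℂ) (Y : Matrix (Fin d) (Fin d) ℂ) :
    LstarMap U Y = (N : ℂ)⁻¹ • ∑ i, ∑ j, (E U i j)ᴴ * Y * E U i j := by
  ext k l
  simp only [LstarMap, Matrix.of_apply, Matrix.smul_apply, Matrix.sum_apply, smul_eq_mul]
  congr 1
  rw [Finset.sum_comm]
  refine Finset.sum_congr rfl fun a _ => ?_
  simp only [Matrix.mul_apply, Matrix.conjTranspose_apply, Fintype.sum_prod_type, E,
    Matrix.of_apply, Matrix.kroneckerMap_apply, Matrix.one_apply]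
  simp [mul_ite, mul_one, mul_zero, ite_mul, zero_mul, Finset.sum_ite_irrel,
    Finset.sum_const_zero, Finset.sum_ite_eq', Finset.sum_ite_eq, Finset.mul_sum, Finset.sum_mul]

lemma block_entry (U : Matrix (Fin N × Fin d) (Fin N × Fin d) ℂ)
    (X : Matrix (Fin N) (Fin N) ℂ) (a b : Fin N) (k l : Fin d) :
    (Uᴴ * (X ⊗ₖ (1 : Matrix (Fin d) (Fin d) ℂ)) * U) (a, k) (b, l)
      = ∑ i, ∑ j, X i j * ((E U i a)ᴴ * E U j b) k l := by
  simp only [Matrix.mul_apply, Matrix.conjTranspose_apply, Fintype.sum_prod_type, E,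
    Matrix.of_apply, Matrix.kroneckerMap_apply, Matrix.one_apply]
  simp [mul_ite, mul_one, mul_zero, ite_mul, zero_mul, Finset.sum_ite_irrel,
    Finset.sum_const_zero, Finset.sum_ite_eq', Finset.sum_ite_eq, Finset.mul_sum, Finset.sum_mul]
  have step1 : ∀ (f : Fin N → Fin N → Fin d → ℂ),
      (∑ x : Fin N, ∑ y : Fin d, ∑ i : Fin N, f i x y)
        = ∑ i : Fin N, ∑ x : Fin N, ∑ y : Fin d, f i x y := fun f =>
    calc (∑ x : Fin N, ∑ y : Fin d, ∑ i : Fin N, f i x y)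
        = ∑ x : Fin N, ∑ i : Fin N, ∑ y : Fin d, f i x y :=
          Finset.sum_congr rfl fun x _ => Finset.sum_comm
      _ = ∑ i : Fin N, ∑ x : Fin N, ∑ y : Fin d, f i x y := Finset.sum_comm
  rw [step1]
  exact Finset.sum_congr rfl fun i _ => Finset.sum_congr rfl fun x _ =>
    Finset.sum_congr rfl fun m _ => by ring

/-- entry of `(1 ⊗ Y) * M` -/
lemma oneKron_mul_entry (Y : Matrix (Fin d) (Fin d) ℂ)
    (M : Matrix (Fin N × Fin d) (Fin N × Fin d) ℂ) (a b : Fin N) (k l : Fin d) :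
    (((1 : Matrix (Fin N) (Fin N) ℂ) ⊗ₖ Y) * M) (a, k) (b, l)
      = ∑ m, Y k m * M (a, m) (b, l) := by
  simp [Matrix.mul_apply, Fintype.sum_prod_type, Matrix.kroneckerMap_apply, Matrix.one_apply,
    ite_mul, zero_mul, Finset.sum_ite_irrel, Finset.sum_const_zero, Finset.sum_ite_eq,
    Finset.sum_ite_eq']

lemma mul_oneKron_entry (Y : Matrix (Fin d) (Fin d) ℂ)
    (M : Matrix (Fin N × Fin d) (Fin N × Fin d) ℂ) (a b : Fin N) (k l : Fin d) :
    (M * ((1 : Matrix (Fin N) (Fin N) ℂ) ⊗ₖ Y)) (a, k) (b, l)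
      = ∑ m, M (a, k) (b, m) * Y m l := by
  simp [Matrix.mul_apply, Fintype.sum_prod_type, Matrix.kroneckerMap_apply, Matrix.one_apply,
    mul_ite, mul_zero, ite_mul, zero_mul, Finset.sum_ite_irrel, Finset.sum_const_zero,
    Finset.sum_ite_eq, Finset.sum_ite_eq']

/-- the `(a,b)` block of an operator on the tensor product -/
noncomputable def Bl (M : Matrix (Fin N × Fin d) (Fin N × Fin d) ℂ) (a b : Fin N) :
    Matrix (Fin d) (Fin d) ℂ := Matrix.of fun k l => M (a, k) (b, l)

lemma block_eq (U : Matrix (Fin N × Fin d) (Fin N × Fin d) ℂ)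
    (X : Matrix (Fin N) (Fin N) ℂ) (a b : Fin N) :
    Bl (Uᴴ * (X ⊗ₖ (1 : Matrix (Fin d) (Fin d) ℂ)) * U) a b
      = ∑ i, ∑ j, X i j • ((E U i a)ᴴ * E U j b) := by
  ext k l
  simp only [Bl, Matrix.of_apply, Matrix.sum_apply, Matrix.smul_apply, smul_eq_mul]
  exact block_entry U X a b k l

lemma Bl_oneKron_mul (Y : Matrix (Fin d) (Fin d) ℂ)
    (M : Matrix (Fin N × Fin d) (Fin N × Fin d) ℂ) (a b : Fin N) :
    Bl (((1 : Matrix (Fin N) (Fin N) ℂ) ⊗ₖ Y) * M) a b = Y * Bl M a b := by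
  ext k l
  simpa [Bl, Matrix.mul_apply] using oneKron_mul_entry Y M a b k l

lemma Bl_mul_oneKron (Y : Matrix (Fin d) (Fin d) ℂ)
    (M : Matrix (Fin N × Fin d) (Fin N × Fin d) ℂ) (a b : Fin N) :
    Bl (M * ((1 : Matrix (Fin N) (Fin N) ℂ) ⊗ₖ Y)) a b = Bl M a b * Y := by
  ext k l
  simpa [Bl, Matrix.mul_apply] using mul_oneKron_entry Y M a b k l

lemma eq_of_blocks {M M' : Matrix (Fin N × Fin d) (Fin N × Fin d) ℂ}
    (h : ∀ a b, Bl M a b = Bl M' a b) : M = M' := by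
  ext ⟨a, k⟩ ⟨b, l⟩
  have := congrFun (congrFun (h a b) k) l
  simpa [Bl] using this

/-- the commutation condition, in terms of the Kraus blocks -/
lemma comm_iff_blocks {U : Matrix (Fin N × Fin d) (Fin N × Fin d) ℂ}
    (Y : Matrix (Fin d) (Fin d) ℂ) :
    (∀ X : Matrix (Fin N) (Fin N) ℂ,
        ((1 : Matrix (Fin N) (Fin N) ℂ) ⊗ₖ Y) * (Uᴴ * (X ⊗ₖ (1 : Matrix (Fin d) (Fin d) ℂ)) * U)
          = (Uᴴ * (X ⊗ₖ (1 : Matrix (Fin d) (Fin d) ℂ)) * U) * ((1 : Matrix (Fin N) (Fin N) ℂ) ⊗ₖ Y))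
      ↔ ∀ i j a b, Y * ((E U i a)ᴴ * E U j b) = ((E U i a)ᴴ * E U j b) * Y := by
  constructor
  · intro h i j a b
    have h' := congrArg (fun M => Bl M a b) (h (Matrix.single i j 1))
    simp only [Bl_oneKron_mul, Bl_mul_oneKron, block_eq] at h'
    simpa [Matrix.single, ite_and, ite_smul, one_smul, zero_smul,
      Finset.sum_ite_irrel, Finset.sum_const_zero, Finset.sum_ite_eq,
      Finset.sum_ite_eq'] using h'
  · intro h X
    refine eq_of_blocks fun a b => ?_
    rw [Bl_oneKron_mul, Bl_mul_oneKron, block_eq]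
    rw [Finset.mul_sum, Finset.sum_mul]
    refine Finset.sum_congr rfl fun i _ => ?_
    rw [Finset.mul_sum, Finset.sum_mul]
    refine Finset.sum_congr rfl fun j _ => ?_
    rw [mul_smul_comm, smul_mul_assoc, h]

/-- the quadruple Kraus sum `∑ F Z Fᴴ` with `F = Eabᴴ Eij` -/
noncomputable def Gsum (U : Matrix (Fin N × Fin d) (Fin N × Fin d) ℂ)
    (Z : Matrix (Fin d) (Fin d) ℂ) : Matrix (Fin d) (Fin d) ℂ :=
  ∑ a, ∑ b, ∑ i, ∑ j,
    ((E U a b)ᴴ * E U i j) * Z * ((E U a b)ᴴ * E U i j)ᴴ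

lemma sum_const_smul {M : Type*} [AddCommMonoid M] [Module ℂ M] (x : M) :
    ∑ _a : Fin N, x = (N : ℂ) • x := by
  simp [Finset.sum_const, (Nat.cast_smul_eq_nsmul ℂ _ _).symm]

lemma sum4_swap {M : Type*} [AddCommMonoid M] (f : Fin N → Fin N → Fin N → Fin N → M) :
    ∑ a, ∑ b, ∑ i, ∑ j, f a b i j = ∑ i, ∑ j, ∑ a, ∑ b, f a b i j := by
  have h1 : ∀ g : Fin N → Fin N → M, ∑ x, ∑ y, g x y = ∑ y, ∑ x, g x y :=
    fun g => Finset.sum_comm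
  calc ∑ a, ∑ b, ∑ i, ∑ j, f a b i j
      = ∑ a, ∑ i, ∑ b, ∑ j, f a b i j := Finset.sum_congr rfl fun a _ => h1 _
    _ = ∑ i, ∑ a, ∑ b, ∑ j, f a b i j := h1 _
    _ = ∑ i, ∑ a, ∑ j, ∑ b, f a b i j := Finset.sum_congr rfl fun i _ =>
          Finset.sum_congr rfl fun a _ => h1 _
    _ = ∑ i, ∑ j, ∑ a, ∑ b, f a b i j := Finset.sum_congr rfl fun i _ => h1 _

lemma hA {U : Matrix (Fin N × Fin d) (Fin N × Fin d) ℂ} (hU : Uᴴ * U = 1) (b : Fin N) :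
    ∑ a, (E U a b)ᴴ * E U a b = 1 := by simpa using sumA hU b b

lemma hB {U : Matrix (Fin N × Fin d) (Fin N × Fin d) ℂ} (hU' : U * Uᴴ = 1) (a : Fin N) :
    ∑ b, E U a b * (E U a b)ᴴ = 1 := by simpa using sumB hU' a a

lemma hAA {U : Matrix (Fin N × Fin d) (Fin N × Fin d) ℂ} (hU : Uᴴ * U = 1) :
    ∑ a, ∑ b, (E U a b)ᴴ * E U a b = (N : ℂ) • 1 := by
  rw [Finset.sum_comm]
  calc ∑ b, ∑ a, (E U a b)ᴴ * E U a b
      = ∑ _b : Fin N, (1 : Matrix (Fin d) (Fin d) ℂ) :=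
        Finset.sum_congr rfl fun b _ => hA hU b
    _ = (N : ℂ) • 1 := sum_const_smul _

lemma hBB {U : Matrix (Fin N × Fin d) (Fin N × Fin d) ℂ} (hU' : U * Uᴴ = 1) :
    ∑ a, ∑ b, E U a b * (E U a b)ᴴ = (N : ℂ) • 1 := by
  calc ∑ a, ∑ b, E U a b * (E U a b)ᴴ
      = ∑ _a : Fin N, (1 : Matrix (Fin d) (Fin d) ℂ) :=
        Finset.sum_congr rfl fun a _ => hB hU' a
    _ = (N : ℂ) • 1 := sum_const_smul _

lemma Gsum_of_comm {U : Matrix (Fin N × Fin d) (Fin N × Fin d) ℂ}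
    (hU : Uᴴ * U = 1) (hU' : U * Uᴴ = 1) (Z : Matrix (Fin d) (Fin d) ℂ)
    (hZ : ∀ i j a b, Z * ((E U i a)ᴴ * E U j b) = ((E U i a)ᴴ * E U j b) * Z) :
    Gsum U Z = ((N : ℂ)^2) • Z := by
  have key : ∀ a b i j : Fin N,
      ((E U a b)ᴴ * E U i j) * Z * ((E U a b)ᴴ * E U i j)ᴴ
        = Z * ((E U a b)ᴴ * (E U i j * (E U i j)ᴴ) * E U a b) := by
    intro a b i j
    rw [Matrix.conjTranspose_mul, Matrix.conjTranspose_conjTranspose,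
      show ((E U a b)ᴴ * E U i j) * Z = Z * ((E U a b)ᴴ * E U i j) from (hZ a i b j).symm]
    simp only [mul_assoc]
  simp only [Gsum, key]
  simp only [← Finset.mul_sum, ← Finset.sum_mul]
  rw [hBB hU']
  simp only [mul_smul_comm, smul_mul_assoc, mul_one, ← Finset.smul_sum]
  rw [hAA hU]
  simp [smul_smul, mul_smul_comm, mul_one, pow_two]

lemma sumFHF {U : Matrix (Fin N × Fin d) (Fin N × Fin d) ℂ}
    (hU : Uᴴ * U = 1) (hU' : U * Uᴴ = 1) :
    ∑ a, ∑ b, ∑ i, ∑ j, ((E U a b)ᴴ * E U i j)ᴴ * ((E U a b)ᴴ * E U i j)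
      = ((N : ℂ)^2) • 1 := by
  have key : ∀ a b i j : Fin N,
      ((E U a b)ᴴ * E U i j)ᴴ * ((E U a b)ᴴ * E U i j)
        = (E U i j)ᴴ * (E U a b * (E U a b)ᴴ) * E U i j := by
    intro a b i j
    rw [Matrix.conjTranspose_mul, Matrix.conjTranspose_conjTranspose]
    simp only [mul_assoc]
  simp only [key]
  rw [sum4_swap]
  simp only [← Finset.mul_sum, ← Finset.sum_mul]
  rw [hBB hU']
  simp only [mul_smul_comm, smul_mul_assoc, mul_one, ← Finset.smul_sum]
  rw [hAA hU]
  simp [smul_smul, pow_two]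

lemma Gsum_conjT (U : Matrix (Fin N × Fin d) (Fin N × Fin d) ℂ)
    (Z : Matrix (Fin d) (Fin d) ℂ) : Gsum U Zᴴ = (Gsum U Z)ᴴ := by
  simp [Gsum, Matrix.conjTranspose_sum, Matrix.conjTranspose_mul,
    Matrix.conjTranspose_conjTranspose, mul_assoc]

lemma LL_eq (U : Matrix (Fin N × Fin d) (Fin N × Fin d) ℂ)
    (Z : Matrix (Fin d) (Fin d) ℂ) :
    LstarMap U (Lmap U Z) = (((N : ℂ)^2)⁻¹) • Gsum U Z := by
  rw [Lmap_eq, Lstar_eq]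
  rw [show ((N : ℂ)^2)⁻¹ = (N : ℂ)⁻¹ * (N : ℂ)⁻¹ by rw [pow_two, mul_inv]]
  rw [← smul_smul]
  congr 1
  simp only [Gsum, Finset.smul_sum, Finset.mul_sum, Finset.sum_mul, mul_smul_comm,
    smul_mul_assoc, Matrix.conjTranspose_mul, Matrix.conjTranspose_conjTranspose, mul_assoc]


lemma trace_conj (C : Matrix (Fin d) (Fin d) ℂ) :
    Matrix.trace (C * Cᴴ) = ((∑ k, ∑ l, Complex.normSq (C k l) : ℝ) : ℂ) := by
  simp [Matrix.trace, Matrix.diag, Matrix.mul_apply, Matrix.conjTranspose_apply,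
    Complex.mul_conj]

lemma sq_zero (C : Matrix (Fin d) (Fin d) ℂ)
    (h : ∑ k, ∑ l, Complex.normSq (C k l) = 0) : C = 0 := by
  ext k l
  have h1 := (Finset.sum_eq_zero_iff_of_nonneg
    (fun k _ => Finset.sum_nonneg fun l _ => Complex.normSq_nonneg _)).mp h k (Finset.mem_univ k)
  have h2 := (Finset.sum_eq_zero_iff_of_nonneg
    (fun l _ => Complex.normSq_nonneg _)).mp h1 l (Finset.mem_univ l)
  simpa using Complex.normSq_eq_zero.mp h2

lemma quad_zero {f : Fin N → Fin N → Fin N → Fin N → ℝ}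
    (h0 : ∀ a b i j, 0 ≤ f a b i j)
    (h : ∑ a, ∑ b, ∑ i, ∑ j, f a b i j = 0) : ∀ a b i j, f a b i j = 0 := by
  intro a b i j
  have n3 : ∀ a b i, 0 ≤ ∑ j, f a b i j := fun a b i =>
    Finset.sum_nonneg fun j _ => h0 a b i j
  have n2 : ∀ a b, 0 ≤ ∑ i, ∑ j, f a b i j := fun a b =>
    Finset.sum_nonneg fun i _ => n3 a b i
  have n1 : ∀ a, 0 ≤ ∑ b, ∑ i, ∑ j, f a b i j := fun a =>
    Finset.sum_nonneg fun b _ => n2 a b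
  have h1 := (Finset.sum_eq_zero_iff_of_nonneg (fun a _ => n1 a)).mp h a (Finset.mem_univ a)
  have h2 := (Finset.sum_eq_zero_iff_of_nonneg (fun b _ => n2 a b)).mp h1 b (Finset.mem_univ b)
  have h3 := (Finset.sum_eq_zero_iff_of_nonneg (fun i _ => n3 a b i)).mp h2 i (Finset.mem_univ i)
  exact (Finset.sum_eq_zero_iff_of_nonneg (fun j _ => h0 a b i j)).mp h3 j (Finset.mem_univ j)

lemma traceGsum {U : Matrix (Fin N × Fin d) (Fin N × Fin d) ℂ}
    (hU : Uᴴ * U = 1) (hU' : U * Uᴴ = 1) (Z : Matrix (Fin d) (Fin d) ℂ) :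
    Matrix.trace (Gsum U Z) = (N : ℂ)^2 * Matrix.trace Z := by
  have cyc : ∀ a b i j : Fin N,
      Matrix.trace (((E U a b)ᴴ * E U i j) * Z * ((E U a b)ᴴ * E U i j)ᴴ)
        = Matrix.trace ((((E U a b)ᴴ * E U i j)ᴴ * ((E U a b)ᴴ * E U i j)) * Z) := by
    intro a b i j
    rw [Matrix.trace_mul_comm, ← mul_assoc]
  simp only [Gsum, Matrix.trace_sum, cyc]
  simp only [← Finset.sum_mul, ← Matrix.trace_sum]
  rw [sumFHF hU hU']
  rw [smul_mul_assoc, one_mul, Matrix.trace_smul, smul_eq_mul]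

end EnvAux

/-- the commutant of the Environment Right-Action Algebra `A_r(U)` is exactly the
right-singular space of `L` for the singular value `1`, i.e. the fixed points of `L* ∘ L`. -/
theorem commutant_envActAlg_eq_singular_space (N d : ℕ) (hN : 0 < N) (hd : 0 < d)
    (U : Matrix (Fin N × Fin d) (Fin N × Fin d) ℂ)
    (hU : Uᴴ * U = 1) (hU' : U * Uᴴ = 1) :
    ∀ Y : Matrix (Fin d) (Fin d) ℂ,
      (∀ X : Matrix (Fin N) (Fin N) ℂ,
        ((1 : Matrix (Fin N) (Fin N) ℂ) ⊗ₖ Y) * (Uᴴ * (X ⊗ₖ (1 : Matrix (Fin d) (Fin d) ℂ)) * U)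
          = (Uᴴ * (X ⊗ₖ (1 : Matrix (Fin d) (Fin d) ℂ)) * U) * ((1 : Matrix (Fin N) (Fin N) ℂ) ⊗ₖ Y))
      ↔ LstarMap U (Lmap U Y) = Y := by
  intro Y
  rw [EnvAux.comm_iff_blocks]
  have hc : (N : ℂ) ≠ 0 := Nat.cast_ne_zero.mpr hN.ne'
  have hc2 : ((N : ℂ)^2) ≠ 0 := pow_ne_zero _ hc
  constructor
  · intro h
    rw [EnvAux.LL_eq, EnvAux.Gsum_of_comm hU hU' Y h, smul_smul,
      inv_mul_cancel₀ hc2, one_smul]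
  · intro hfix i j a b
    have hGY : EnvAux.Gsum U Y = ((N : ℂ)^2) • Y := by
      rw [EnvAux.LL_eq, inv_smul_eq_iff₀ hc2] at hfix
      exact hfix
    have hGYH : EnvAux.Gsum U Yᴴ = ((N : ℂ)^2) • Yᴴ := by
      rw [EnvAux.Gsum_conjT, hGY, Matrix.conjTranspose_smul]
      congr 1
      simp
    have hG1 : EnvAux.Gsum U (1 : Matrix (Fin d) (Fin d) ℂ) = ((N : ℂ)^2) • 1 :=
      EnvAux.Gsum_of_comm hU hU' 1 (fun _ _ _ _ => by rw [one_mul, mul_one])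
    set F : Fin N → Fin N → Fin N → Fin N → Matrix (Fin d) (Fin d) ℂ :=
      fun a b i j => (EnvAux.E U a b)ᴴ * EnvAux.E U i j with hF
    have expand : ∀ a b i j,
        (F a b i j * Y - Y * F a b i j) * (F a b i j * Y - Y * F a b i j)ᴴ
          = F a b i j * (Y * Yᴴ) * (F a b i j)ᴴ
            - (F a b i j * Y * (F a b i j)ᴴ) * Yᴴ
            - Y * (F a b i j * Yᴴ * (F a b i j)ᴴ)
            + Y * (F a b i j * 1 * (F a b i j)ᴴ) * Yᴴ := by
      intro a b i j
      simp only [Matrix.conjTranspose_sub, Matrix.conjTranspose_mul]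
      noncomm_ring
    have e1 : ∑ a, ∑ b, ∑ i, ∑ j,
        Matrix.trace (F a b i j * (Y * Yᴴ) * (F a b i j)ᴴ)
          = Matrix.trace (EnvAux.Gsum U (Y * Yᴴ)) := by
      simp only [EnvAux.Gsum, Matrix.trace_sum, hF]
    have e2 : ∑ a, ∑ b, ∑ i, ∑ j,
        Matrix.trace ((F a b i j * Y * (F a b i j)ᴴ) * Yᴴ)
          = Matrix.trace (EnvAux.Gsum U Y * Yᴴ) := by
      simp only [EnvAux.Gsum, Matrix.trace_sum, Finset.sum_mul, hF]
    have e3 : ∑ a, ∑ b, ∑ i, ∑ j,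
        Matrix.trace (Y * (F a b i j * Yᴴ * (F a b i j)ᴴ))
          = Matrix.trace (Y * EnvAux.Gsum U Yᴴ) := by
      simp only [EnvAux.Gsum, Matrix.trace_sum, Finset.mul_sum, hF]
    have e4 : ∑ a, ∑ b, ∑ i, ∑ j,
        Matrix.trace (Y * (F a b i j * 1 * (F a b i j)ᴴ) * Yᴴ)
          = Matrix.trace (Y * EnvAux.Gsum U (1 : Matrix (Fin d) (Fin d) ℂ) * Yᴴ) := by
      simp only [EnvAux.Gsum, Matrix.trace_sum, Finset.mul_sum, Finset.sum_mul, hF]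
    have Htr : ∑ a, ∑ b, ∑ i, ∑ j,
        Matrix.trace ((F a b i j * Y - Y * F a b i j)
          * (F a b i j * Y - Y * F a b i j)ᴴ) = 0 := by
      simp only [expand, Matrix.trace_sub, Matrix.trace_add,
        Finset.sum_sub_distrib, Finset.sum_add_distrib]
      rw [e1, e2, e3, e4]
      rw [EnvAux.traceGsum hU hU' (Y * Yᴴ), hGY, hGYH, hG1]
      simp only [smul_mul_assoc, mul_smul_comm, one_mul, mul_one,
        Matrix.trace_smul, smul_eq_mul]
      ring
    have Hreal : ∑ a, ∑ b, ∑ i, ∑ j,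
        (∑ k, ∑ l, Complex.normSq ((F a b i j * Y - Y * F a b i j) k l)) = (0 : ℝ) := by
      simp only [EnvAux.trace_conj] at Htr
      exact_mod_cast Htr
    have hzero := EnvAux.quad_zero
      (fun a b i j => Finset.sum_nonneg fun k _ =>
        Finset.sum_nonneg fun l _ => Complex.normSq_nonneg _) Hreal i a j b
    have hC : F i a j b * Y - Y * F i a j b = 0 := EnvAux.sq_zero _ hzero
    exact (sub_eq_zero.mp hC).symm
end

section
/- Let N, d be positive integers and let U be a unitary matrix indexed by Fin N × Fin d. Then for every Y : Matrix (Fin d) (Fin d) ℂ, the following are equivalent: (i) (1 ⊗ Y) * U = U * (1 ⊗ Y) and (1 ⊗ Y) * Uᴴ = Uᴴ * (1 ⊗ Y); (ii) Y commutes with every slice U(f,g) and every slice (Uᴴ)(f,g), f, g : Fin N → ℂ. Consequently the commutant of the Environment Algebra A(U) equals { Y : (1 ⊗ Y) commutes with both U and Uᴴ }. -/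
open scoped Kronecker
open Matrix

lemma entry_left {N d : ℕ} (M : Matrix (Fin N × Fin d) (Fin N × Fin d) ℂ)
    (Y : Matrix (Fin d) (Fin d) ℂ) (f g : Fin N → ℂ) (k l : Fin d) :
    (Y * envSlice M f g) k l =
      ∑ i, ∑ j, (starRingEnd ℂ) (f i) * g j *
        ((((1 : Matrix (Fin N) (Fin N) ℂ) ⊗ₖ Y) * M) (i, k) (j, l)) := by
  simp only [Matrix.mul_apply, envSlice, Matrix.of_apply, Fintype.sum_prod_type,
    Matrix.kroneckerMap_apply, Matrix.one_apply, ite_mul, one_mul, zero_mul,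
    Finset.sum_ite_irrel, Finset.sum_const_zero,
    Finset.sum_ite_eq, Finset.mem_univ, if_true, Finset.mul_sum]
  rw [Finset.sum_comm]
  refine Finset.sum_congr rfl fun i _ => ?_
  rw [Finset.sum_comm]
  refine Finset.sum_congr rfl fun p _ => ?_
  refine Finset.sum_congr rfl fun j _ => ?_
  ring

lemma entry_right {N d : ℕ} (M : Matrix (Fin N × Fin d) (Fin N × Fin d) ℂ)
    (Y : Matrix (Fin d) (Fin d) ℂ) (f g : Fin N → ℂ) (k l : Fin d) :
    (envSlice M f g * Y) k l =
      ∑ i, ∑ j, (starRingEnd ℂ) (f i) * g j *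
        ((M * ((1 : Matrix (Fin N) (Fin N) ℂ) ⊗ₖ Y)) (i, k) (j, l)) := by
  simp only [Matrix.mul_apply, envSlice, Matrix.of_apply, Fintype.sum_prod_type,
    Matrix.kroneckerMap_apply, Matrix.one_apply, mul_ite, mul_one, mul_zero, ite_mul, zero_mul,
    Finset.sum_ite_irrel, Finset.sum_const_zero,
    Finset.sum_ite_eq, Finset.sum_ite_eq', Finset.mem_univ, if_true, Finset.sum_mul,
    Finset.mul_sum]
  rw [Finset.sum_comm]
  refine Finset.sum_congr rfl fun i _ => ?_
  rw [Finset.sum_comm]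
  refine Finset.sum_congr rfl fun j _ => ?_
  refine Finset.sum_congr rfl fun p _ => ?_
  ring

lemma comm_iff_slices {N d : ℕ} (M : Matrix (Fin N × Fin d) (Fin N × Fin d) ℂ)
    (Y : Matrix (Fin d) (Fin d) ℂ) :
    (((1 : Matrix (Fin N) (Fin N) ℂ) ⊗ₖ Y) * M = M * ((1 : Matrix (Fin N) (Fin N) ℂ) ⊗ₖ Y)) ↔
      ∀ f g : Fin N → ℂ, Y * envSlice M f g = envSlice M f g * Y := by
  constructor
  · intro h f g
    ext k l
    rw [entry_left, entry_right, h]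
  · intro h
    ext ⟨i, k⟩ ⟨j, l⟩
    have h1 := congrFun (congrFun (h (Pi.single i 1) (Pi.single j 1)) k) l
    rw [entry_left, entry_right] at h1
    simpa [Pi.single_apply, apply_ite (starRingEnd ℂ), ite_mul, mul_ite, zero_mul, mul_zero,
      Finset.sum_ite_eq, Finset.sum_ite_irrel, Finset.sum_const_zero] using h1

lemma star_envSlice {N d : ℕ} (M : Matrix (Fin N × Fin d) (Fin N × Fin d) ℂ)
    (f g : Fin N → ℂ) : star (envSlice M f g) = envSlice Mᴴ g f := by
  ext k l
  simp only [Matrix.star_apply, envSlice, Matrix.of_apply, star_sum,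
    Matrix.conjTranspose_apply]
  rw [Finset.sum_comm]
  refine Finset.sum_congr rfl fun i _ => Finset.sum_congr rfl fun j _ => ?_
  simp only [star_mul', Complex.star_def, Complex.conj_conj]
  ring

/-- `1 ⊗ Y` commutes with `U` and `Uᴴ` iff `Y` commutes with every slice
`U(f,g)` and `Uᴴ(f,g)`; consequently the commutant of `A(U)` is
`{Y | 1 ⊗ Y commutes with U and Uᴴ}`. -/
theorem commutant_envAlg_characterization (N d : ℕ) (hN : 0 < N) (hd : 0 < d)
    (U : Matrix (Fin N × Fin d) (Fin N × Fin d) ℂ)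
    (hU : Uᴴ * U = 1) (hU' : U * Uᴴ = 1) :
    (∀ Y : Matrix (Fin d) (Fin d) ℂ,
      (((1 : Matrix (Fin N) (Fin N) ℂ) ⊗ₖ Y) * U = U * ((1 : Matrix (Fin N) (Fin N) ℂ) ⊗ₖ Y) ∧
        ((1 : Matrix (Fin N) (Fin N) ℂ) ⊗ₖ Y) * Uᴴ = Uᴴ * ((1 : Matrix (Fin N) (Fin N) ℂ) ⊗ₖ Y))
      ↔ (∀ f g : Fin N → ℂ,
          Y * envSlice U f g = envSlice U f g * Y ∧
          Y * envSlice Uᴴ f g = envSlice Uᴴ f g * Y)) ∧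
    {Y : Matrix (Fin d) (Fin d) ℂ | ∀ A ∈ envAlg U, Y * A = A * Y} =
      {Y : Matrix (Fin d) (Fin d) ℂ |
        ((1 : Matrix (Fin N) (Fin N) ℂ) ⊗ₖ Y) * U = U * ((1 : Matrix (Fin N) (Fin N) ℂ) ⊗ₖ Y) ∧
        ((1 : Matrix (Fin N) (Fin N) ℂ) ⊗ₖ Y) * Uᴴ = Uᴴ * ((1 : Matrix (Fin N) (Fin N) ℂ) ⊗ₖ Y)} := by
  constructor
  · intro Y
    constructor
    · rintro ⟨h1, h2⟩ f g
      exact ⟨(comm_iff_slices U Y).1 h1 f g, (comm_iff_slices Uᴴ Y).1 h2 f g⟩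
    · intro h
      exact ⟨(comm_iff_slices U Y).2 fun f g => (h f g).1,
        (comm_iff_slices Uᴴ Y).2 fun f g => (h f g).2⟩
  · ext Y
    simp only [Set.mem_setOf_eq]
    constructor
    · intro hY
      refine ⟨(comm_iff_slices U Y).2 fun f g => ?_, (comm_iff_slices Uᴴ Y).2 fun f g => ?_⟩
      · exact hY _ (StarAlgebra.subset_adjoin ℂ _ (Or.inl ⟨f, g, rfl⟩))
      · exact hY _ (StarAlgebra.subset_adjoin ℂ _ (Or.inr ⟨f, g, rfl⟩))
    · rintro ⟨h1, h2⟩ A hA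
      have hs : ∀ f g : Fin N → ℂ, Y * envSlice U f g = envSlice U f g * Y :=
        (comm_iff_slices U Y).1 h1
      have hs' : ∀ f g : Fin N → ℂ, Y * envSlice Uᴴ f g = envSlice Uᴴ f g * Y :=
        (comm_iff_slices Uᴴ Y).1 h2
      -- star Y also commutes with the slices
      have hstarU : ∀ f g : Fin N → ℂ, star Y * envSlice U f g = envSlice U f g * star Y := by
        intro f g
        have := congrArg star (hs' g f)
        rw [StarMul.star_mul, StarMul.star_mul, star_envSlice, Matrix.conjTranspose_conjTranspose] at this
        exact this.symm
      have hstarU' : ∀ f g : Fin N → ℂ, star Y * envSlice Uᴴ f g = envSlice Uᴴ f g * star Y := by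
        intro f g
        have := congrArg star (hs g f)
        rw [StarMul.star_mul, StarMul.star_mul, star_envSlice] at this
        exact this.symm
      have hle : envAlg U ≤ StarSubalgebra.centralizer ℂ {Y} := by
        apply StarAlgebra.adjoin_le
        rintro A (⟨f, g, rfl⟩ | ⟨f, g, rfl⟩) <;>
          simp only [SetLike.mem_coe] <;>
          rw [StarSubalgebra.mem_centralizer_iff] <;>
          rintro y rfl
        · exact ⟨hs f g, hstarU f g⟩
        · exact ⟨hs' f g, hstarU' f g⟩
      have hmem := hle hA
      rw [StarSubalgebra.mem_centralizer_iff] at hmem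
      exact (hmem Y rfl).1
end

section
/- Let H be a complex Hilbert space and A a von Neumann algebra on H. Then there exists a unique continuous linear map P : H →L[ℂ] H which is an orthogonal projection (P ∘ P = P and P is self-adjoint), belongs to the commutant A′ of A, and satisfies: (i) the compression P A P is commutative, i.e. for all a, b ∈ A, (P∘a∘P) ∘ (P∘b∘P) = (P∘b∘P) ∘ (P∘a∘P); and (ii) P is maximal with this property: for every orthogonal projection Q ∈ A′ such that for all a, b ∈ A, (Q∘a∘Q) ∘ (Q∘b∘Q) = (Q∘b∘Q) ∘ (Q∘a∘Q), one has Q ≤ P, i.e. P ∘ Q = Q. (P may be the zero map.) -/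
/-! The projection is the one onto `K = {x | a (b x) = b (a x) for all a, b ∈ A}`, a closed
subspace. Since `A` is closed under products, `K` is `A`-invariant, and since `A` is also closed
under adjoints, the projection onto `K` lies in `A′`. For an idempotent `Q ∈ A′` one has
`(QaQ)(QbQ) = abQ`, so `QAQ` is commutative exactly when `range Q ⊆ K`; this gives both the
commutativity of `PAP` and the maximality of `P`, and uniqueness is antisymmetry of `≤` on
self-adjoint idempotents. -/

open ContinuousLinearMap VonNeumannAlgebra

lemma IsSelfAdjoint.eq_of_mul_eq_right {R : Type*} [Mul R] [StarMul R] {p q : R}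
    (hp : IsSelfAdjoint p) (hq : IsSelfAdjoint q) (hpq : p * q = q) (hqp : q * p = p) :
    p = q :=
  calc p = q * p := hqp.symm
    _ = star (p * q) := by rw [star_mul, hp.star_eq, hq.star_eq]
    _ = q := by rw [hpq, hq.star_eq]

lemma IsIdempotentElem.compression_mul_compression {R : Type*} [Semigroup R] {p a b : R}
    (hp : IsIdempotentElem p) (ha : Commute p a) (hb : Commute p b) :
    p * a * p * (p * b * p) = a * b * p := by
  have hcompress {c : R} (hc : Commute p c) : p * c * p = c * p := by
    rw [hc.eq, mul_assoc, hp.eq]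
  rw [hcompress ha, hcompress hb, mul_assoc, ← mul_assoc p, hcompress hb, ← mul_assoc]

section CommutingSubspace

variable {𝕜 E : Type*} [NontriviallyNormedField 𝕜] [NormedAddCommGroup E] [NormedSpace 𝕜 E]

def commutingSubspace (S : Set (E →L[𝕜] E)) : Submodule 𝕜 E :=
  ⨅ a ∈ S, ⨅ b ∈ S, (a * b - b * a).ker

variable {S : Set (E →L[𝕜] E)}

lemma mem_commutingSubspace_iff {x : E} :
    x ∈ commutingSubspace S ↔ ∀ a ∈ S, ∀ b ∈ S, a (b x) = b (a x) := by
  simp [commutingSubspace, sub_eq_zero]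

lemma isClosed_commutingSubspace (S : Set (E →L[𝕜] E)) :
    IsClosed (commutingSubspace S : Set E) := by
  simp only [commutingSubspace, Submodule.coe_iInf]
  exact isClosed_biInter fun a _ => isClosed_biInter fun b _ => isClosed_ker _

lemma commutingSubspace_mem_invtSubmodule {M : Type*} [SetLike M (E →L[𝕜] E)]
    [MulMemClass M (E →L[𝕜] E)] {A : M} {a : E →L[𝕜] E} (ha : a ∈ A) :
    commutingSubspace (A : Set (E →L[𝕜] E)) ∈ Module.End.invtSubmodule (a : E →ₗ[𝕜] E) := by
  intro x hx
  simp only [Submodule.mem_comap, coe_coe, mem_commutingSubspace_iff, SetLike.mem_coe] at hx ⊢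
  intro b hb c hc
  calc b (c (a x)) = b (a (c x)) := by rw [hx c hc a ha]
    _ = c (b (a x)) := hx (b * a) (mul_mem hb ha) c hc

lemma compressions_commute_iff_range_le {q : E →L[𝕜] E} (hq : IsIdempotentElem q)
    (hqS : ∀ a ∈ S, Commute q a) :
    (∀ a ∈ S, ∀ b ∈ S, q * a * q * (q * b * q) = q * b * q * (q * a * q)) ↔
      q.range ≤ commutingSubspace S := by
  have hcomm {a b} (ha : a ∈ S) (hb : b ∈ S) :
      q * a * q * (q * b * q) = q * b * q * (q * a * q) ↔ ∀ x, a (b (q x)) = b (a (q x)) := by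
    rw [hq.compression_mul_compression (hqS a ha) (hqS b hb),
      hq.compression_mul_compression (hqS b hb) (hqS a ha), ContinuousLinearMap.ext_iff]
    rfl
  simp only [SetLike.le_def, LinearMap.mem_range, forall_exists_index, forall_apply_eq_imp_iff,
    mem_commutingSubspace_iff]
  exact ⟨fun h x a ha b hb => (hcomm ha hb).mp (h a ha b hb) x,
    fun h a ha b hb => (hcomm ha hb).mpr fun x => h x a ha b hb⟩

end CommutingSubspace

instance {𝕜 E : Type*} [RCLike 𝕜] [NormedAddCommGroup E] [InnerProductSpace 𝕜 E]
    [CompleteSpace E] {S : Set (E →L[𝕜] E)} : (commutingSubspace S).HasOrthogonalProjection :=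
  have := (isClosed_commutingSubspace S).completeSpace_coe
  inferInstance

lemma starProjection_commutingSubspace_mem_commutant {H : Type*} [NormedAddCommGroup H]
    [InnerProductSpace ℂ H] [CompleteSpace H] (A : VonNeumannAlgebra H) :
    (commutingSubspace (A : Set (H →L[ℂ] H))).starProjection ∈ A.commutant := by
  rw [IsStarProjection.mem_iff isStarProjection_starProjection, commutant_commutant,
    Submodule.range_starProjection]
  exact fun a ha => commutingSubspace_mem_invtSubmodule ha

/-- for any von Neumann algebra `A` on a complex Hilbert space `H`, there is a
unique orthogonal projection `P` in the commutant `A′` such that the compression `P A P` is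
commutative and `P` dominates every orthogonal projection `Q ∈ A′` with `Q A Q` commutative. -/
theorem exists_unique_maximal_commutative_compression_projection
    (H : Type*) [NormedAddCommGroup H] [InnerProductSpace ℂ H] [CompleteSpace H]
    (A : VonNeumannAlgebra H) :
    ∃! P : H →L[ℂ] H,
      P * P = P ∧ IsSelfAdjoint P ∧ P ∈ A.commutant ∧
      (∀ a ∈ A, ∀ b ∈ A,
        (P * a * P) * (P * b * P) = (P * b * P) * (P * a * P)) ∧
      (∀ Q : H →L[ℂ] H, Q * Q = Q → IsSelfAdjoint Q → Q ∈ A.commutant →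
        (∀ a ∈ A, ∀ b ∈ A,
          (Q * a * Q) * (Q * b * Q) = (Q * b * Q) * (Q * a * Q)) →
        P * Q = Q) := by
  set K := commutingSubspace (A : Set (H →L[ℂ] H))
  have hK : IsStarProjection K.starProjection := isStarProjection_starProjection
  have hKA := starProjection_commutingSubspace_mem_commutant A
  have key {Q : H →L[ℂ] H} (hQ : IsIdempotentElem Q) (hQA : Q ∈ A.commutant) :=
    compressions_commute_iff_range_le hQ fun a ha => (mem_commutant_iff.mp hQA a ha).symm
  have maximal : ∀ Q : H →L[ℂ] H, Q * Q = Q → IsSelfAdjoint Q → Q ∈ A.commutant →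
      (∀ a ∈ A, ∀ b ∈ A, (Q * a * Q) * (Q * b * Q) = (Q * b * Q) * (Q * a * Q)) →
      K.starProjection * Q = Q := by
    intro Q hQ _ hQA hQc
    ext x
    exact Submodule.starProjection_eq_self_iff.mpr ((key hQ hQA).mp hQc ⟨x, rfl⟩)
  have hKc := (key hK.isIdempotentElem hKA).mpr (Submodule.range_starProjection K).le
  refine ⟨K.starProjection, ⟨hK.isIdempotentElem, hK.isSelfAdjoint, hKA, hKc, maximal⟩, ?_⟩
  rintro P ⟨hP, hPsa, hPA, hPc, hPmax⟩
  exact hPsa.eq_of_mul_eq_right hK.isSelfAdjoint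
    (hPmax _ hK.isIdempotentElem hK.isSelfAdjoint hKA hKc) (maximal P hP hPsa hPA hPc)
end

section
/- Let N, d be positive integers and let U, V be unitary matrices indexed by Fin N × Fin d. If Vᴴ * (X ⊗ 1) * V = Uᴴ * (X ⊗ 1) * U for every X : Matrix (Fin N) (Fin N) ℂ, then there exists a unitary matrix W : Matrix (Fin d) (Fin d) ℂ such that V = (1 ⊗ W) * U. -/
open scoped Kronecker
open Matrix

/-- two unitaries with the same action on system observables differ by a
unitary of the environment: `V = (1 ⊗ W) U`. -/
theorem exists_unitary_factor_of_same_action (N d : ℕ) (hN : 0 < N) (hd : 0 < d)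
    (U V : Matrix (Fin N × Fin d) (Fin N × Fin d) ℂ)
    (hU : Uᴴ * U = 1) (hU' : U * Uᴴ = 1)
    (hV : Vᴴ * V = 1) (hV' : V * Vᴴ = 1)
    (hact : ∀ X : Matrix (Fin N) (Fin N) ℂ,
      Vᴴ * (X ⊗ₖ (1 : Matrix (Fin d) (Fin d) ℂ)) * V
        = Uᴴ * (X ⊗ₖ (1 : Matrix (Fin d) (Fin d) ℂ)) * U) :
    ∃ W : Matrix (Fin d) (Fin d) ℂ, Wᴴ * W = 1 ∧ W * Wᴴ = 1 ∧
      V = ((1 : Matrix (Fin N) (Fin N) ℂ) ⊗ₖ W) * U := by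
  set S : Matrix (Fin N × Fin d) (Fin N × Fin d) ℂ := V * Uᴴ with hSdef
  have hcomm : ∀ X : Matrix (Fin N) (Fin N) ℂ,
      (X ⊗ₖ (1 : Matrix (Fin d) (Fin d) ℂ)) * S = S * (X ⊗ₖ (1 : Matrix (Fin d) (Fin d) ℂ)) := by
    intro X
    have h := hact X
    have h2 : V * (Vᴴ * (X ⊗ₖ (1 : Matrix (Fin d) (Fin d) ℂ)) * V) * Uᴴ
        = V * (Uᴴ * (X ⊗ₖ (1 : Matrix (Fin d) (Fin d) ℂ)) * U) * Uᴴ := by rw [h]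
    calc (X ⊗ₖ (1 : Matrix (Fin d) (Fin d) ℂ)) * S
        = V * (Vᴴ * (X ⊗ₖ (1 : Matrix (Fin d) (Fin d) ℂ)) * V) * Uᴴ := by
          simp only [hSdef, Matrix.mul_assoc, ← Matrix.mul_assoc V Vᴴ, hV', Matrix.one_mul]
      _ = V * (Uᴴ * (X ⊗ₖ (1 : Matrix (Fin d) (Fin d) ℂ)) * U) * Uᴴ := h2
      _ = S * (X ⊗ₖ (1 : Matrix (Fin d) (Fin d) ℂ)) := by
          simp only [hSdef, Matrix.mul_assoc, hU', Matrix.mul_one]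
  have rel : ∀ (a b i j : Fin N) (k l : Fin d),
      (if a = i then (1:ℂ) else 0) * S (b, k) (j, l)
        = (if b = j then (1:ℂ) else 0) * S (i, k) (a, l) := by
    intro a b i j k l
    have h2 := congrFun (congrFun (hcomm (Matrix.single a b 1)) (i, k)) (j, l)
    simp only [Matrix.mul_apply, Fintype.sum_prod_type, Matrix.kroneckerMap_apply,
      Matrix.single, Matrix.one_apply, Matrix.of_apply, ite_mul, one_mul, zero_mul,
      mul_ite, mul_one, mul_zero] at h2
    simpa [Finset.sum_ite_eq, Finset.sum_ite_eq', ite_and] using h2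
  set e : Fin N := ⟨0, hN⟩
  have key : ∀ (i j : Fin N) (k l : Fin d),
      S (i, k) (j, l) = if i = j then S (e, k) (e, l) else 0 := by
    intro i j k l
    have h1 := rel i i i j k l
    simp only [if_pos rfl, one_mul] at h1
    by_cases hij : i = j
    · subst hij
      simp only [if_pos rfl, one_mul] at h1
      have h2 := rel e i e i k l
      simpa using h2
    · simp [hij] at h1 ⊢
      exact h1
  refine ⟨Matrix.of fun k l => S (e, k) (e, l), ?_, ?_, ?_⟩
  all_goals
    have hS : ((1 : Matrix (Fin N) (Fin N) ℂ) ⊗ₖ (Matrix.of fun k l => S (e, k) (e, l))) = S := by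
      ext ⟨i, k⟩ ⟨j, l⟩
      simp only [Matrix.kroneckerMap_apply, Matrix.one_apply, Matrix.of_apply, key i j k l,
        ite_mul, one_mul, zero_mul]
  · -- Wᴴ * W = 1
    have hSS : Sᴴ * S = 1 := by
      simp only [hSdef, Matrix.conjTranspose_mul, Matrix.conjTranspose_conjTranspose]
      calc U * Vᴴ * (V * Uᴴ) = U * (Vᴴ * V) * Uᴴ := by simp [Matrix.mul_assoc]
        _ = 1 := by rw [hV, Matrix.mul_one, hU']
    have hkron : ((1 : Matrix (Fin N) (Fin N) ℂ) ⊗ₖ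
        ((Matrix.of fun k l => S (e, k) (e, l))ᴴ * (Matrix.of fun k l => S (e, k) (e, l)))) = 1 := by
      rw [← Matrix.one_mul (1 : Matrix (Fin N) (Fin N) ℂ), Matrix.mul_kronecker_mul]
      have hconj : ((1 : Matrix (Fin N) (Fin N) ℂ) ⊗ₖ (Matrix.of fun k l => S (e, k) (e, l))ᴴ) = Sᴴ := by
        rw [← hS]
        ext ⟨i, k⟩ ⟨j, l⟩
        simp only [Matrix.kroneckerMap_apply, Matrix.one_apply, Matrix.conjTranspose_apply,
          Matrix.of_apply, key j i l k]
        by_cases h : i = j <;> simp [h, eq_comm]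
      rw [hconj, hS, hSS]
    ext k l
    have := congrFun (congrFun hkron (e, k)) (e, l)
    simpa [Matrix.one_apply, Prod.ext_iff] using this
  · -- W * Wᴴ = 1
    have hSS : S * Sᴴ = 1 := by
      simp only [hSdef, Matrix.conjTranspose_mul, Matrix.conjTranspose_conjTranspose]
      calc V * Uᴴ * (U * Vᴴ) = V * (Uᴴ * U) * Vᴴ := by simp [Matrix.mul_assoc]
        _ = 1 := by rw [hU, Matrix.mul_one, hV']
    have hkron : ((1 : Matrix (Fin N) (Fin N) ℂ) ⊗ₖ
        ((Matrix.of fun k l => S (e, k) (e, l)) * (Matrix.of fun k l => S (e, k) (e, l))ᴴ)) = 1 := by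
      rw [← Matrix.one_mul (1 : Matrix (Fin N) (Fin N) ℂ), Matrix.mul_kronecker_mul]
      have hconj : ((1 : Matrix (Fin N) (Fin N) ℂ) ⊗ₖ (Matrix.of fun k l => S (e, k) (e, l))ᴴ) = Sᴴ := by
        rw [← hS]
        ext ⟨i, k⟩ ⟨j, l⟩
        simp only [Matrix.kroneckerMap_apply, Matrix.one_apply, Matrix.conjTranspose_apply,
          Matrix.of_apply, key j i l k]
        by_cases h : i = j <;> simp [h, eq_comm]
      rw [hconj, hS, hSS]
    ext k l
    have := congrFun (congrFun hkron (e, k)) (e, l)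
    simpa [Matrix.one_apply, Prod.ext_iff] using this
  · rw [hS, hSdef, Matrix.mul_assoc, hU, Matrix.mul_one]
end

section
/- Let N, d be positive integers, let U, V be unitary matrices indexed by Fin N × Fin d, and let ψ : Fin d → ℂ be a unit vector. Suppose that the set { (X ⊗ 1) · U · (f ⊗ ψ) : X ∈ Matrix (Fin N) (Fin N) ℂ, f : Fin N → ℂ } spans the whole space (Fin N × Fin d) → ℂ (i.e. (ℂ^N ⊗ ℂ^d, f ↦ U(f ⊗ ψ)) is a minimal Stinespring representation), and that Vᴴ * (X ⊗ 1) * V = Uᴴ * (X ⊗ 1) * U for every X. Then the set { (X ⊗ 1) · V · (f ⊗ ψ) : X ∈ Matrix (Fin N) (Fin N) ℂ, f : Fin N → ℂ } also spans (Fin N × Fin d) → ℂ. -/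
open scoped Kronecker
open Matrix
set_option maxHeartbeats 1000000

/-- minimality of the Stinespring representation `f ↦ U (f ⊗ ψ)` is a property
of the equivalence class of `U` for the relation "same action on the system". -/
theorem minimal_stinespring_of_same_action (N d : ℕ) (hN : 0 < N) (hd : 0 < d)
    (U V : Matrix (Fin N × Fin d) (Fin N × Fin d) ℂ)
    (hU : Uᴴ * U = 1) (hU' : U * Uᴴ = 1)
    (hV : Vᴴ * V = 1) (hV' : V * Vᴴ = 1)
    (ψ : Fin d → ℂ) (hψ : ∑ k, (starRingEnd ℂ) (ψ k) * ψ k = 1)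
    (hmin : Submodule.span ℂ
      {v : Fin N × Fin d → ℂ | ∃ (X : Matrix (Fin N) (Fin N) ℂ) (f : Fin N → ℂ),
        v = (X ⊗ₖ (1 : Matrix (Fin d) (Fin d) ℂ)).mulVec
              (U.mulVec fun p => f p.1 * ψ p.2)} = ⊤)
    (hact : ∀ X : Matrix (Fin N) (Fin N) ℂ,
      Vᴴ * (X ⊗ₖ (1 : Matrix (Fin d) (Fin d) ℂ)) * V
        = Uᴴ * (X ⊗ₖ (1 : Matrix (Fin d) (Fin d) ℂ)) * U) :
    Submodule.span ℂ
      {v : Fin N × Fin d → ℂ | ∃ (X : Matrix (Fin N) (Fin N) ℂ) (f : Fin N → ℂ),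
        v = (X ⊗ₖ (1 : Matrix (Fin d) (Fin d) ℂ)).mulVec
              (V.mulVec fun p => f p.1 * ψ p.2)} = ⊤ := by
  set W := V * Uᴴ with hW
  have key : ∀ X : Matrix (Fin N) (Fin N) ℂ,
      W * ((X ⊗ₖ (1 : Matrix (Fin d) (Fin d) ℂ)) * U)
        = (X ⊗ₖ (1 : Matrix (Fin d) (Fin d) ℂ)) * V := by
    intro X
    calc W * ((X ⊗ₖ (1 : Matrix (Fin d) (Fin d) ℂ)) * U)
        = V * (Uᴴ * (X ⊗ₖ (1 : Matrix (Fin d) (Fin d) ℂ)) * U) := by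
          simp [hW, Matrix.mul_assoc]
      _ = V * (Vᴴ * (X ⊗ₖ (1 : Matrix (Fin d) (Fin d) ℂ)) * V) := by rw [hact]
      _ = (V * Vᴴ) * ((X ⊗ₖ (1 : Matrix (Fin d) (Fin d) ℂ)) * V) := by
          simp [Matrix.mul_assoc]
      _ = (X ⊗ₖ (1 : Matrix (Fin d) (Fin d) ℂ)) * V := by rw [hV', Matrix.one_mul]
  have keyv : ∀ (X : Matrix (Fin N) (Fin N) ℂ) (g : Fin N × Fin d → ℂ),
      W.mulVec ((X ⊗ₖ (1 : Matrix (Fin d) (Fin d) ℂ)).mulVec (U.mulVec g))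
        = (X ⊗ₖ (1 : Matrix (Fin d) (Fin d) ℂ)).mulVec (V.mulVec g) := by
    intro X g
    rw [Matrix.mulVec_mulVec, Matrix.mulVec_mulVec, Matrix.mulVec_mulVec,
      ← key X, Matrix.mul_assoc]
  have himg : {v : Fin N × Fin d → ℂ | ∃ (X : Matrix (Fin N) (Fin N) ℂ) (f : Fin N → ℂ),
        v = (X ⊗ₖ (1 : Matrix (Fin d) (Fin d) ℂ)).mulVec
              (V.mulVec fun p => f p.1 * ψ p.2)}
      = (Matrix.mulVecLin W) ''
        {v : Fin N × Fin d → ℂ | ∃ (X : Matrix (Fin N) (Fin N) ℂ) (f : Fin N → ℂ),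
          v = (X ⊗ₖ (1 : Matrix (Fin d) (Fin d) ℂ)).mulVec
                (U.mulVec fun p => f p.1 * ψ p.2)} := by
    ext v
    constructor
    · rintro ⟨X, f, rfl⟩
      refine ⟨_, ⟨X, f, rfl⟩, ?_⟩
      simp only [Matrix.mulVecLin_apply]
      exact keyv X _
    · rintro ⟨v, ⟨X, f, rfl⟩, rfl⟩
      refine ⟨X, f, ?_⟩
      simp only [Matrix.mulVecLin_apply]
      exact keyv X _
  rw [himg, ← Submodule.map_span, hmin, Submodule.map_top, LinearMap.range_eq_top]
  intro y
  refine ⟨(U * Vᴴ).mulVec y, ?_⟩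
  have hWinv : W * (U * Vᴴ) = 1 := by
    calc W * (U * Vᴴ) = V * (Uᴴ * U) * Vᴴ := by simp [hW, Matrix.mul_assoc]
      _ = 1 := by rw [hU, Matrix.mul_one, hV']
  simp only [Matrix.mulVecLin_apply, Matrix.mulVec_mulVec, hWinv, Matrix.one_mulVec]
end

section
/- Let N, d be positive integers, let U be a unitary matrix indexed by Fin N × Fin d, and let ψ : Fin d → ℂ be a unit vector. If the set { (X ⊗ 1) · U · (f ⊗ ψ) : X ∈ Matrix (Fin N) (Fin N) ℂ, f : Fin N → ℂ } spans (Fin N × Fin d) → ℂ (minimal Stinespring representation), then ψ is a cyclic vector for the Environment Right-Action Algebra A_r(U): the set { A · ψ : A ∈ A_r(U) } spans Fin d → ℂ. -/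
open scoped Kronecker
open Matrix

section Aux

variable {N d : ℕ}

/-- `f ⊗ 1` as an `(N*d) × d` matrix. -/
noncomputable def colTensor (N d : ℕ) (f : Fin N → ℂ) : Matrix (Fin N × Fin d) (Fin d) ℂ :=
  Matrix.of fun p l => f p.1 * (1 : Matrix (Fin d) (Fin d) ℂ) p.2 l

lemma envSlice_single_snd (M : Matrix (Fin N × Fin d) (Fin N × Fin d) ℂ)
    (g : Fin N → ℂ) (j : Fin N) (k m : Fin d) :
    envSlice M g (Pi.single j 1) k m = ((colTensor N d g)ᴴ * M) k (j, m) := by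
  simp [envSlice, colTensor, Matrix.mul_apply, Fintype.sum_prod_type,
    Matrix.conjTranspose_apply, Matrix.one_apply, Pi.single_apply,
    apply_ite (starRingEnd ℂ)]

lemma envSlice_single_fst (M : Matrix (Fin N × Fin d) (Fin N × Fin d) ℂ)
    (h : Fin N → ℂ) (j : Fin N) (m l : Fin d) :
    envSlice M (Pi.single j 1) h m l = (M * colTensor N d h) (j, m) l := by
  simp [envSlice, colTensor, Matrix.mul_apply, Fintype.sum_prod_type,
    Matrix.one_apply, Pi.single_apply, mul_comm]

lemma colTensor_conjT_mul (g h : Fin N → ℂ) :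
    (colTensor N d g)ᴴ * colTensor N d h
      = (∑ a, (starRingEnd ℂ) (g a) * h a) • (1 : Matrix (Fin d) (Fin d) ℂ) := by
  ext k l
  simp only [colTensor, Matrix.mul_apply, Fintype.sum_prod_type, Matrix.of_apply,
    Matrix.conjTranspose_apply, Matrix.one_apply, Matrix.smul_apply, smul_eq_mul,
    apply_ite (starRingEnd ℂ), map_zero, _root_.map_one, mul_ite, ite_mul, mul_zero, zero_mul,
    mul_one, one_mul, Finset.sum_ite_eq, Finset.sum_ite_eq', Finset.mem_univ, if_true]
  by_cases hkl : k = l <;> simp [hkl, mul_comm, eq_comm]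

lemma key_identity (U : Matrix (Fin N × Fin d) (Fin N × Fin d) ℂ) (hU : Uᴴ * U = 1)
    (g h : Fin N → ℂ) :
    ∑ j, envSlice Uᴴ g (Pi.single j 1) * envSlice U (Pi.single j 1) h
      = (∑ a, (starRingEnd ℂ) (g a) * h a) • (1 : Matrix (Fin d) (Fin d) ℂ) := by
  have hM : ∑ j, envSlice Uᴴ g (Pi.single j 1) * envSlice U (Pi.single j 1) h
      = ((colTensor N d g)ᴴ * Uᴴ) * (U * colTensor N d h) := by
    ext k l
    rw [Matrix.sum_apply, Matrix.mul_apply]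
    rw [Fintype.sum_prod_type]
    refine Finset.sum_congr rfl fun j _ => ?_
    rw [Matrix.mul_apply]
    refine Finset.sum_congr rfl fun m _ => ?_
    rw [envSlice_single_snd, envSlice_single_fst]
  rw [hM, Matrix.mul_assoc, ← Matrix.mul_assoc Uᴴ U, hU, Matrix.one_mul,
    ← colTensor_conjT_mul]

lemma slice_single_mulVec (U : Matrix (Fin N × Fin d) (Fin N × Fin d) ℂ)
    (f ψ : _) (i : Fin N) (k : Fin d) :
    (envSlice U (Pi.single i 1) f).mulVec ψ k
      = U.mulVec (fun p => f p.1 * ψ p.2) (i, k) := by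
  simp only [Matrix.mulVec, dotProduct]
  rw [Fintype.sum_prod_type]
  rw [Finset.sum_comm]
  refine Finset.sum_congr rfl fun l _ => ?_
  rw [envSlice_single_fst, Matrix.mul_apply, Fintype.sum_prod_type, Finset.sum_mul]
  refine Finset.sum_congr rfl fun c _ => ?_
  simp [colTensor, Matrix.one_apply, Finset.sum_mul, mul_ite, ite_mul, mul_assoc]

lemma dot_aux (i0 : Fin N) (r : Fin d → ℂ) (X : Matrix (Fin N) (Fin N) ℂ)
    (y : Fin N × Fin d → ℂ) :
    ((fun p : Fin N × Fin d => if p.1 = i0 then r p.2 else 0) ⬝ᵥ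
        ((X ⊗ₖ (1 : Matrix (Fin d) (Fin d) ℂ)) *ᵥ y))
      = ∑ j, X i0 j * (r ⬝ᵥ fun k => y (j, k)) := by
  simp only [dotProduct]
  rw [Fintype.sum_prod_type, Finset.sum_comm]
  simp only [ite_mul, zero_mul, Finset.sum_ite_eq', Finset.mem_univ, if_true]
  simp only [Matrix.mulVec, dotProduct, Fintype.sum_prod_type, Matrix.kroneckerMap_apply,
    Matrix.one_apply, mul_ite, mul_zero, mul_one, ite_mul, zero_mul,
    Finset.sum_ite_eq, Finset.sum_ite_eq', Finset.mem_univ, if_true, Finset.mul_sum]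
  rw [Finset.sum_comm]
  refine Finset.sum_congr rfl fun j _ => Finset.sum_congr rfl fun k _ => by ring

lemma span_w (hN : 0 < N) (U : Matrix (Fin N × Fin d) (Fin N × Fin d) ℂ) (ψ : Fin d → ℂ)
    (hmin : Submodule.span ℂ
      {v : Fin N × Fin d → ℂ | ∃ (X : Matrix (Fin N) (Fin N) ℂ) (f : Fin N → ℂ),
        v = (X ⊗ₖ (1 : Matrix (Fin d) (Fin d) ℂ)).mulVec
              (U.mulVec fun p => f p.1 * ψ p.2)} = ⊤)
    (r : Fin d → ℂ)
    (hr : ∀ (i : Fin N) (f : Fin N → ℂ), r ⬝ᵥ (envSlice U (Pi.single i 1) f).mulVec ψ = 0) :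
    r = 0 := by
  set i0 : Fin N := ⟨0, hN⟩ with hi0
  set R : Fin N × Fin d → ℂ := fun p => if p.1 = i0 then r p.2 else 0 with hR
  have hall : ∀ x : Fin N × Fin d → ℂ, R ⬝ᵥ x = 0 := by
    intro x
    have hx : x ∈ Submodule.span ℂ
      {v : Fin N × Fin d → ℂ | ∃ (X : Matrix (Fin N) (Fin N) ℂ) (f : Fin N → ℂ),
        v = (X ⊗ₖ (1 : Matrix (Fin d) (Fin d) ℂ)).mulVec
              (U.mulVec fun p => f p.1 * ψ p.2)} := hmin ▸ Submodule.mem_top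
    induction hx using Submodule.span_induction with
    | mem v hv =>
      obtain ⟨X, f, rfl⟩ := hv
      have hw : ∀ j : Fin N, (r ⬝ᵥ fun k => U.mulVec (fun p => f p.1 * ψ p.2) (j, k)) = 0 := by
        intro j
        have := hr j f
        rw [show ((envSlice U (Pi.single j 1) f).mulVec ψ)
              = fun k => U.mulVec (fun p => f p.1 * ψ p.2) (j, k) from
          funext fun k => slice_single_mulVec U f ψ j k] at this
        exact this
      rw [hR, dot_aux i0 r X (U.mulVec fun p => f p.1 * ψ p.2)]
      simp [hw]
    | zero => simp
    | add x y _ _ hx hy => rw [dotProduct_add, hx, hy, add_zero]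
    | smul c x _ hx => rw [dotProduct_smul, hx, smul_zero]
  funext k
  have := hall (Pi.single (i0, k) 1)
  rw [dotProduct_single] at this
  simpa [hR] using this

lemma vecMul_sum' {m n ι : Type*} [Fintype m] [Fintype ι] (v : m → ℂ)
    (M : ι → Matrix m n ℂ) : v ᵥ* (∑ j, M j) = ∑ j, v ᵥ* M j := by
  funext l
  simp only [Matrix.vecMul, dotProduct, Matrix.sum_apply, Finset.mul_sum, Finset.sum_apply]
  exact Finset.sum_comm


end Aux

/-- if `f ↦ U (f ⊗ ψ)` is a minimal Stinespring representation, then `ψ` is a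
cyclic vector for `A_r(U)`. -/
theorem cyclic_of_minimal_stinespring (N d : ℕ) (hN : 0 < N) (hd : 0 < d)
    (U : Matrix (Fin N × Fin d) (Fin N × Fin d) ℂ)
    (hU : Uᴴ * U = 1) (hU' : U * Uᴴ = 1)
    (ψ : Fin d → ℂ) (hψ : ∑ k, (starRingEnd ℂ) (ψ k) * ψ k = 1)
    (hmin : Submodule.span ℂ
      {v : Fin N × Fin d → ℂ | ∃ (X : Matrix (Fin N) (Fin N) ℂ) (f : Fin N → ℂ),
        v = (X ⊗ₖ (1 : Matrix (Fin d) (Fin d) ℂ)).mulVec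
              (U.mulVec fun p => f p.1 * ψ p.2)} = ⊤) :
    Submodule.span ℂ
      {v : Fin d → ℂ | ∃ A ∈ envActAlg U, v = A.mulVec ψ} = ⊤ := by
  by_contra hne
  have hlt : Submodule.span ℂ
      {v : Fin d → ℂ | ∃ A ∈ envActAlg U, v = A.mulVec ψ} < ⊤ := lt_top_iff_ne_top.mpr hne
  obtain ⟨F, hF0, hFbot⟩ := Submodule.exists_dual_map_eq_bot_of_lt_top hlt inferInstance
  have hvan : ∀ v ∈ Submodule.span ℂ
      {v : Fin d → ℂ | ∃ A ∈ envActAlg U, v = A.mulVec ψ}, F v = 0 := by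
    intro v hv
    have h1 := Submodule.mem_map_of_mem (f := F) hv
    rw [hFbot] at h1
    simpa using h1
  set φ : Fin d → ℂ := fun k => F (fun j => if k = j then 1 else 0) with hφ
  have hFeq : ∀ v, F v = φ ⬝ᵥ v := by
    intro v
    conv_lhs => rw [pi_eq_sum_univ v, map_sum]
    rw [dotProduct]
    refine Finset.sum_congr rfl fun k _ => ?_
    rw [F.map_smul, smul_eq_mul, hφ]
    ring
  have hgen : ∀ f₁ g₁ f₂ g₂,
      φ ⬝ᵥ ((envSlice Uᴴ f₁ g₁ * envSlice U f₂ g₂).mulVec ψ) = 0 := by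
    intro f₁ g₁ f₂ g₂
    rw [← hFeq]
    exact hvan _ (Submodule.subset_span
      ⟨_, StarAlgebra.subset_adjoin ℂ _ ⟨f₁, g₁, f₂, g₂, rfl⟩, rfl⟩)
  have hzero : ∀ (g : Fin N → ℂ) (j : Fin N),
      φ ᵥ* (envSlice Uᴴ g (Pi.single j 1)) = 0 := by
    intro g j
    apply span_w hN U ψ hmin
    intro i f
    rw [← dotProduct_mulVec, mulVec_mulVec]
    exact hgen g (Pi.single j 1) (Pi.single i 1) f
  set i0 : Fin N := ⟨0, hN⟩
  have hk := key_identity U hU (Pi.single i0 1) (Pi.single i0 1)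
  have hc : (∑ a, (starRingEnd ℂ) ((Pi.single i0 1 : Fin N → ℂ) a)
      * (Pi.single i0 1 : Fin N → ℂ) a) = 1 := by
    simp [Pi.single_apply, apply_ite (starRingEnd ℂ)]
  rw [hc, one_smul] at hk
  have hφ0 : φ = 0 := by
    have h2 : φ ᵥ* (1 : Matrix (Fin d) (Fin d) ℂ) = 0 := by
      rw [← hk, vecMul_sum']
      refine Finset.sum_eq_zero fun j _ => ?_
      rw [← Matrix.vecMul_vecMul, hzero, Matrix.zero_vecMul]
    simpa [Matrix.vecMul_one] using h2
  exact hF0 (LinearMap.ext fun v => by rw [hFeq v, hφ0]; simp)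
end

section
/- Let N, d be positive integers and let U be a unitary matrix indexed by Fin N × Fin d. If for every unit vector ψ : Fin d → ℂ the set { (X ⊗ 1) · U · (f ⊗ ψ) : X ∈ Matrix (Fin N) (Fin N) ℂ, f : Fin N → ℂ } spans (Fin N × Fin d) → ℂ (i.e. the Stinespring representation (ℂ^N ⊗ ℂ^d, U_ψ) is minimal for every pure state ψ), then A_r(U) is the full matrix algebra: A_r(U) = ⊤, i.e. every d × d complex matrix belongs to A_r(U). -/
open scoped Kronecker
open Matrix

/-!
Write `T_g = tensorLeft (Fin d) g` for `ψ ↦ g ⊗ ψ`. Then `M(f,g) = T_fᴴ M T_g` and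
`T_g T_fᴴ = |g⟩⟨f| ⊗ 1`, so `A_r(U)` contains `T_fᴴ Uᴴ (X ⊗ 1) U T_g` for every `X`. If a
functional `ℓ` kills `A_r(U) ψ` for a unit vector `ψ`, then `ℓ ∘ T_eᴴ Uᴴ` kills every
`(X ⊗ 1) U (g ⊗ ψ)`; these span by minimality, and `T_eᴴ Uᴴ U T_e = 1` for a unit vector `e`,
so `ℓ = 0`. Hence every nonzero vector is cyclic, `A_r(U)` acts irreducibly on `ℂ^d`, and
Burnside's theorem gives `A_r(U) = M_d(ℂ)`.
-/

theorem Subalgebra.isSimpleModule_of_irreducible {K V : Type*} [Field K] [AddCommGroup V]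
    [Module K V] [Nontrivial V] (A : Subalgebra K (Module.End K V))
    (hA : ∀ E : Submodule K V, (∀ a ∈ A, ∀ v ∈ E, a v ∈ E) → E ≠ ⊥ → E = ⊤) :
    IsSimpleModule A V where
  eq_bot_or_eq_top E := or_iff_not_imp_left.mpr fun hE => by
    rw [← Submodule.restrictScalars_eq_top_iff K]
    refine hA _ (fun a ha v hv => E.smul_mem ⟨a, ha⟩ hv) ?_
    rwa [Ne, Submodule.restrictScalars_eq_bot_iff]

-- Burnside's theorem: by Schur's lemma `End_A V` is the scalars, so Jacobson density makes `A`
-- everything.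
theorem Subalgebra.eq_top_of_isSimpleModule {K V : Type*} [Field K] [IsAlgClosed K]
    [AddCommGroup V] [Module K V] [FiniteDimensional K V]
    (A : Subalgebra K (Module.End K V)) [IsSimpleModule A V] : A = ⊤ := by
  have schur := IsSimpleModule.algebraMap_end_bijective_of_isAlgClosed K (A := A) (V := V)
  have : Module.Finite (Module.End A V) V := Module.Finite.of_restrictScalars_finite K _ _
  refine eq_top_iff.mpr fun f _ => ?_
  let f' : Module.End (Module.End A V) V :=
    { toFun := f
      map_add' := f.map_add
      map_smul' := fun g v => by
        obtain ⟨c, rfl⟩ := schur.2 g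
        simp [Algebra.algebraMap_eq_smul_one] }
  obtain ⟨a, ha⟩ := Module.Finite.toModuleEnd_moduleEnd_surjective (R := A) (M := V) f'
  have : (a : Module.End K V) = f := LinearMap.ext fun v => congr($ha v)
  exact this ▸ a.2

theorem Matrix.subalgebra_eq_top_of_irreducible {K n : Type*} [Field K] [IsAlgClosed K]
    [Fintype n] [DecidableEq n] [Nonempty n] (A : Subalgebra K (Matrix n n K))
    (hA : ∀ E : Submodule K (n → K), (∀ a ∈ A, ∀ v ∈ E, a *ᵥ v ∈ E) → E ≠ ⊥ → E = ⊤) :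
    A = ⊤ := by
  let e : Matrix n n K →ₐ[K] Module.End K (n → K) := toLinAlgEquiv'.toAlgHom
  have : IsSimpleModule (A.map e) (n → K) :=
    (A.map e).isSimpleModule_of_irreducible fun E hE => hA E fun a ha => hE _ ⟨a, ha, rfl⟩
  rw [← Subalgebra.comap_map_eq_self_of_injective (f := e) toLinAlgEquiv'.injective A,
    (A.map e).eq_top_of_isSimpleModule]
  rfl

theorem exists_smul_sum_conj_mul_self_eq_one {ι : Type*} [Fintype ι] {ψ : ι → ℂ} (hψ : ψ ≠ 0) :
    ∃ c : ℂ, ∑ k, (starRingEnd ℂ) ((c • ψ) k) * (c • ψ) k = 1 := by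
  set s := ∑ k, ‖ψ k‖ ^ 2
  have hs : 0 < s := by
    obtain ⟨k, hk⟩ := Function.ne_iff.mp hψ
    exact Finset.sum_pos' (fun _ _ => by positivity) ⟨k, Finset.mem_univ _, by positivity⟩
  have hsum : ∀ c : ℂ, ∑ k, (starRingEnd ℂ) ((c • ψ) k) * (c • ψ) k = ((‖c‖ ^ 2 * s : ℝ) : ℂ) := by
    intro c
    push_cast [s, Finset.mul_sum]
    refine Finset.sum_congr rfl fun k _ => ?_
    rw [Pi.smul_apply, smul_eq_mul, Complex.conj_mul', norm_mul]
    push_cast; ring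
  refine ⟨((√s)⁻¹ : ℝ), ?_⟩
  rw [hsum, Complex.norm_real, Real.norm_of_nonneg (by positivity), inv_pow, Real.sq_sqrt hs.le,
    inv_mul_cancel₀ hs.ne', Complex.ofReal_one]

namespace Matrix

variable {m R : Type*} (n : Type*) [DecidableEq n] [CommSemiring R]

def tensorLeft (g : m → R) : Matrix (m × n) n R :=
  of fun p l => g p.1 * (1 : Matrix n n R) p.2 l

variable {n}

@[simp]
theorem tensorLeft_apply (g : m → R) (i : m) (k l : n) :
    tensorLeft n g (i, k) l = g i * (1 : Matrix n n R) k l := rfl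

theorem tensorLeft_mulVec [Fintype n] (g : m → R) (ψ : n → R) :
    tensorLeft n g *ᵥ ψ = fun p => g p.1 * ψ p.2 := by
  ext ⟨i, k⟩
  simp [mulVec, dotProduct, one_apply]

variable [StarRing R]

theorem tensorLeft_mul_conjTranspose_tensorLeft [Fintype n] (g f : m → R) :
    tensorLeft n g * (tensorLeft n f)ᴴ = vecMulVec g (star f) ⊗ₖ (1 : Matrix n n R) := by
  ext ⟨i, k⟩ ⟨j, l⟩
  by_cases h : k = l <;> simp [mul_apply, one_apply, vecMulVec_apply, h, eq_comm]

theorem conjTranspose_tensorLeft_mul_tensorLeft [Fintype m] [Fintype n] (f : m → R) :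
    (tensorLeft n f)ᴴ * tensorLeft n f = (star f ⬝ᵥ f) • (1 : Matrix n n R) := by
  ext k l
  by_cases h : k = l <;> simp [mul_apply, one_apply, Fintype.sum_prod_type, dotProduct, h, eq_comm]

end Matrix

def IsMinimalStinespring {N d : ℕ} (U : Matrix (Fin N × Fin d) (Fin N × Fin d) ℂ)
    (ψ : Fin d → ℂ) : Prop :=
  Submodule.span ℂ
    {v : Fin N × Fin d → ℂ | ∃ (X : Matrix (Fin N) (Fin N) ℂ) (f : Fin N → ℂ),
      v = (X ⊗ₖ (1 : Matrix (Fin d) (Fin d) ℂ)).mulVec (U.mulVec fun p => f p.1 * ψ p.2)} = ⊤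

section

variable {N d : ℕ} (U : Matrix (Fin N × Fin d) (Fin N × Fin d) ℂ)

theorem envSlice_eq (M : Matrix (Fin N × Fin d) (Fin N × Fin d) ℂ) (f g : Fin N → ℂ) :
    envSlice M f g = (tensorLeft (Fin d) f)ᴴ * M * tensorLeft (Fin d) g := by
  ext k l
  simp only [envSlice, mul_apply, tensorLeft_apply, conjTranspose_apply, one_apply, of_apply,
    Fintype.sum_prod_type, apply_ite (starRingEnd ℂ), map_zero, mul_ite, ite_mul, mul_zero,
    zero_mul, mul_one, Finset.sum_ite_eq', Finset.mem_univ, if_true, RCLike.star_def]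
  simp only [Finset.sum_mul]
  rw [Finset.sum_comm]
  exact Finset.sum_congr rfl fun i _ => Finset.sum_congr rfl fun j _ => by ring

theorem conjTranspose_tensorLeft_mul_kronecker_mul_mem_envActAlg (f g : Fin N → ℂ)
    (X : Matrix (Fin N) (Fin N) ℂ) :
    (tensorLeft (Fin d) f)ᴴ * Uᴴ * (X ⊗ₖ (1 : Matrix (Fin d) (Fin d) ℂ)) * U *
      tensorLeft (Fin d) g ∈ envActAlg U := by
  induction X using Matrix.induction_on' with
  | h_zero => simp [zero_mem]
  | h_add X Y hX hY =>
    rw [add_kronecker, Matrix.mul_add, Matrix.add_mul, Matrix.add_mul]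
    exact add_mem hX hY
  | h_std_basis a b c =>
    have hsingle : single a b c ⊗ₖ (1 : Matrix (Fin d) (Fin d) ℂ) =
        tensorLeft (Fin d) (Pi.single a c) * (tensorLeft (Fin d) (Pi.single b (1 : ℂ)))ᴴ := by
      rw [tensorLeft_mul_conjTranspose_tensorLeft]
      congr 1
      ext i j
      simp only [single, of_apply, vecMulVec_apply, Pi.star_apply, Pi.single_apply,
        apply_ite star, star_one, star_zero]
      split_ifs <;> simp_all
    refine StarAlgebra.subset_adjoin ℂ _ ⟨f, Pi.single a c, Pi.single b 1, g, ?_⟩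
    simp only [hsingle, envSlice_eq, Matrix.mul_assoc]

theorem eq_top_of_forall_envActAlg_mulVec_mem (hN : 0 < N) (hU : Uᴴ * U = 1) {ψ : Fin d → ℂ}
    (hψ : IsMinimalStinespring U ψ) {E : Submodule ℂ (Fin d → ℂ)}
    (hE : ∀ A ∈ envActAlg U, A *ᵥ ψ ∈ E) : E = ⊤ := by
  by_contra hne
  obtain ⟨ℓ, hℓ, hEℓ⟩ := E.exists_le_ker_of_lt_top (lt_top_iff_ne_top.mpr hne)
  set e : Fin N → ℂ := Pi.single ⟨0, hN⟩ 1
  set T := tensorLeft (Fin d) e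
  have hΛ : ℓ ∘ₗ mulVecLin (Tᴴ * Uᴴ) = 0 := by
    rw [IsMinimalStinespring] at hψ
    rw [← LinearMap.ker_eq_top, eq_top_iff, ← hψ, Submodule.span_le]
    rintro _ ⟨X, f, rfl⟩
    have := hEℓ (hE _ (conjTranspose_tensorLeft_mul_kronecker_mul_mem_envActAlg U e f X))
    simpa [mulVec_mulVec, ← tensorLeft_mulVec, Matrix.mul_assoc] using this
  have hTU : Tᴴ * Uᴴ * (U * T) = 1 := by
    rw [Matrix.mul_assoc, ← Matrix.mul_assoc Uᴴ, hU, Matrix.one_mul,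
      conjTranspose_tensorLeft_mul_tensorLeft]
    simp [e]
  refine hℓ (LinearMap.ext fun v => ?_)
  have := congr($hΛ ((U * T) *ᵥ v))
  rwa [LinearMap.comp_apply, mulVecLin_apply, mulVec_mulVec, hTU, one_mulVec] at this

theorem envActAlg_irreducible (hN : 0 < N) (hU : Uᴴ * U = 1)
    (hmin : ∀ ψ : Fin d → ℂ, ∑ k, (starRingEnd ℂ) (ψ k) * ψ k = 1 → IsMinimalStinespring U ψ)
    (E : Submodule ℂ (Fin d → ℂ)) (hE : ∀ A ∈ envActAlg U, ∀ v ∈ E, A *ᵥ v ∈ E) (hE₀ : E ≠ ⊥) :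
    E = ⊤ := by
  obtain ⟨ψ, hψE, hψ⟩ := E.exists_mem_ne_zero_of_ne_bot hE₀
  obtain ⟨c, hc⟩ := exists_smul_sum_conj_mul_self_eq_one hψ
  exact eq_top_of_forall_envActAlg_mulVec_mem U hN hU (hmin _ hc)
    fun A hA => hE A hA _ (E.smul_mem c hψE)

end

theorem envActAlg_eq_top_of_all_minimal_general (N d : ℕ) (hN : 0 < N) (hd : 0 < d)
    (U : Matrix (Fin N × Fin d) (Fin N × Fin d) ℂ)
    (hU : Uᴴ * U = 1)
    (hmin : ∀ ψ : Fin d → ℂ, (∑ k, (starRingEnd ℂ) (ψ k) * ψ k = 1) →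
      Submodule.span ℂ
        {v : Fin N × Fin d → ℂ | ∃ (X : Matrix (Fin N) (Fin N) ℂ) (f : Fin N → ℂ),
          v = (X ⊗ₖ (1 : Matrix (Fin d) (Fin d) ℂ)).mulVec
                (U.mulVec fun p => f p.1 * ψ p.2)} = ⊤) :
    envActAlg U = ⊤ := by
  have : Nonempty (Fin d) := ⟨⟨0, hd⟩⟩
  exact StarSubalgebra.toSubalgebra_eq_top.mp <|
    Matrix.subalgebra_eq_top_of_irreducible _ (envActAlg_irreducible U hN hU hmin)

/-- if the Stinespring representation `f ↦ U (f ⊗ ψ)` is minimal for every unit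
vector `ψ` of the environment, then `A_r(U)` is the full matrix algebra. -/
theorem envActAlg_eq_top_of_all_minimal (N d : ℕ) (hN : 0 < N) (hd : 0 < d)
    (U : Matrix (Fin N × Fin d) (Fin N × Fin d) ℂ)
    (hU : Uᴴ * U = 1) (hU' : U * Uᴴ = 1)
    (hmin : ∀ ψ : Fin d → ℂ, (∑ k, (starRingEnd ℂ) (ψ k) * ψ k = 1) →
      Submodule.span ℂ
        {v : Fin N × Fin d → ℂ | ∃ (X : Matrix (Fin N) (Fin N) ℂ) (f : Fin N → ℂ),
          v = (X ⊗ₖ (1 : Matrix (Fin d) (Fin d) ℂ)).mulVec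
                (U.mulVec fun p => f p.1 * ψ p.2)} = ⊤) :
    envActAlg U = ⊤ :=
  envActAlg_eq_top_of_all_minimal_general N d hN hd U hU hmin
end
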